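/- arXiv:1505.06112 — 6 statements merged into one kernel-verified Lean document; each statement's English description precedes it below -/
import Mathlib

section
/- Let n ≥ 2 be an integer and let u = (u_1,…,u_n) and v = (v_1,…,v_n) be vectors in ℝ^n with non-negative entries such that ‖u‖₁ = ‖v‖₁ = 1. Then max over pairs j ≠ k of the squared 2×2 determinant (u_j v_k − u_k v_j)² is at least ‖u − v‖₁² / (4 n⁵); i.e. there exist indices j ≠ k in {1,…,n} with (u_j v_k − u_k v_j)² ≥ (1/(4 n⁵)) (∑_{i=1}^n |u_i − v_i|)². -/
/-!
Since `∑ u = ∑ v = 1`, each coordinate of `u - v` is a sum of `2 × 2` minors,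
`u j - v j = ∑ k, (u j * v k - u k * v j)`, and the diagonal minors vanish. Hence `‖u - v‖₁` is at
most the sum of the `|u j * v k - u k * v j|` over the fewer than `n ^ 2` pairs `j ≠ k`, so one of
them is at least `‖u - v‖₁ / n ^ 2`; squaring gives the bound, with room to spare since
`n ^ 4 ≤ 4 * n ^ 5`.
-/

open Finset

section Minors

variable {ι R : Type*} [Fintype ι]

theorem sum_mul_sub_sum_mul_eq_sum_minor [CommRing R] (u v : ι → R) (j : ι) :
    (∑ k, v k) * u j - (∑ k, u k) * v j = ∑ k, (u j * v k - u k * v j) := by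
  rw [sum_sub_distrib, ← mul_sum, ← sum_mul]
  ring

theorem sum_abs_sub_le_sum_offDiag_abs_minor [CommRing R] [LinearOrder R] [IsOrderedRing R]
    (u v : ι → R) (hu : ∑ i, u i = 1) (hv : ∑ i, v i = 1) :
    ∑ i, |u i - v i| ≤ ∑ p ∈ (univ : Finset ι).offDiag, |u p.1 * v p.2 - u p.2 * v p.1| := by
  have hdiag : ∀ p ∈ (univ : Finset (ι × ι)), p ∉ (univ : Finset ι).offDiag →
      |u p.1 * v p.2 - u p.2 * v p.1| = 0 := by
    rintro ⟨j, k⟩ - hp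
    obtain rfl : j = k := by simpa using hp
    simp
  rw [sum_subset (subset_univ _) hdiag, Fintype.sum_prod_type]
  refine sum_le_sum fun j _ => ?_
  calc |u j - v j| = |∑ k, (u j * v k - u k * v j)| := by
        rw [← sum_mul_sub_sum_mul_eq_sum_minor, hu, hv, one_mul, one_mul]
    _ ≤ ∑ k, |u j * v k - u k * v j| := abs_sum_le_sum_abs _ _

theorem exists_ne_sum_abs_sub_div_le_abs_minor [Nontrivial ι] [Field R] [LinearOrder R]
    [IsStrictOrderedRing R] (u v : ι → R) (hu : ∑ i, u i = 1) (hv : ∑ i, v i = 1) :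
    ∃ j k, j ≠ k ∧ (∑ i, |u i - v i|) / (Fintype.card ι : R) ^ 2 ≤ |u j * v k - u k * v j| := by
  set D := ∑ i, |u i - v i|
  have hD : 0 ≤ D := sum_nonneg fun i _ => abs_nonneg _
  have hcard : ((univ : Finset ι).offDiag.card : R) ≤ (Fintype.card ι : R) ^ 2 := by
    rw [sq]; exact_mod_cast (offDiag_card _).trans_le (by simp)
  have hsum : ∑ _p ∈ (univ : Finset ι).offDiag, D / (Fintype.card ι : R) ^ 2
      ≤ ∑ p ∈ (univ : Finset ι).offDiag, |u p.1 * v p.2 - u p.2 * v p.1| :=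
    calc ∑ _p ∈ (univ : Finset ι).offDiag, D / (Fintype.card ι : R) ^ 2
        = ((univ : Finset ι).offDiag.card : R) * D / (Fintype.card ι : R) ^ 2 := by
          rw [sum_const, nsmul_eq_mul, mul_div_assoc]
      _ ≤ D := div_le_of_le_mul₀ (by positivity) hD <| by
          rw [mul_comm D]; exact mul_le_mul_of_nonneg_right hcard hD
      _ ≤ _ := sum_abs_sub_le_sum_offDiag_abs_minor u v hu hv
  obtain ⟨a, b, hab⟩ := exists_pair_ne ι
  obtain ⟨⟨j, k⟩, hp, hle⟩ := exists_le_of_sum_le ⟨(a, b), by simp [hab]⟩ hsum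
  exact ⟨j, k, (mem_offDiag.1 hp).2.2, hle⟩

end Minors

/-- Lemma (gradients vs Jacobians): for `u v : Fin n → ℝ` with non-negative entries
and `‖u‖₁ = ‖v‖₁ = 1`, there exist `j ≠ k` with
`(u j * v k - u k * v j)² ≥ ‖u - v‖₁² / (4 n⁵)`. -/
theorem stmt_0 (n : ℕ) (hn : 2 ≤ n) (u v : Fin n → ℝ)
    (hu_nonneg : ∀ i, 0 ≤ u i) (hv_nonneg : ∀ i, 0 ≤ v i)
    (hu_norm : ∑ i, |u i| = 1) (hv_norm : ∑ i, |v i| = 1) :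
    ∃ j k : Fin n, j ≠ k ∧
      (1 / (4 * (n : ℝ) ^ 5)) * (∑ i, |u i - v i|) ^ 2
        ≤ (u j * v k - u k * v j) ^ 2 := by
  have : Nontrivial (Fin n) := Fin.nontrivial_iff_two_le.2 hn
  have hu : ∑ i, u i = 1 := by simpa only [abs_of_nonneg (hu_nonneg _)] using hu_norm
  have hv : ∑ i, v i = 1 := by simpa only [abs_of_nonneg (hv_nonneg _)] using hv_norm
  obtain ⟨j, k, hjk, hle⟩ := exists_ne_sum_abs_sub_div_le_abs_minor u v hu hv
  rw [Fintype.card_fin] at hle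
  refine ⟨j, k, hjk, ?_⟩
  have hn1 : (1 : ℝ) ≤ n := by exact_mod_cast one_le_two.trans hn
  calc (1 / (4 * (n : ℝ) ^ 5)) * (∑ i, |u i - v i|) ^ 2
      ≤ ((∑ i, |u i - v i|) / (n : ℝ) ^ 2) ^ 2 := by
        rw [div_pow, ← pow_mul, one_div_mul_eq_div]
        gcongr
        have : (n : ℝ) ^ (2 * 2) ≤ (n : ℝ) ^ 5 := pow_le_pow_right₀ hn1 (by norm_num)
        linarith [pow_pos (zero_lt_one.trans_le hn1) 5]
    _ ≤ |u j * v k - u k * v j| ^ 2 := pow_le_pow_left₀ (by positivity) hle 2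
    _ = (u j * v k - u k * v j) ^ 2 := sq_abs _
end

section
/- (Uniform one-variable Łojasiewicz estimate.) Let Ω ⊆ ℝ^n be an open set containing G := [−M, M]^n for some M > 0, and let f : Ω → ℝ be an analytic function such that for every point (x̂, x_n) ∈ Ω, the one-variable function h ↦ f(x̂, x_n + h) is not identically zero in any neighborhood of 0. Then there exist ε₀ > 0 and m ∈ ℕ* such that for all 0 < ε < ε₀ and every x̂ ∈ [−M, M]^{n−1}, the one-dimensional Lebesgue measure of the set {x_n ∈ [−M, M] : |f(x̂, x_n)| < ε} is at most (ε/ε₀)^{1/m}. -/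
open MeasureTheory Filter
open Set

lemma analyticOnNhd_iteratedDeriv {g : ℝ → ℝ} {U : Set ℝ} (hg : AnalyticOnNhd ℝ g U)
    (hU : IsOpen U) (n : ℕ) : AnalyticOnNhd ℝ (iteratedDeriv n g) U := by
  induction n with
  | zero => simpa [iteratedDeriv_zero] using hg
  | succ n ih => rw [iteratedDeriv_succ]; exact ih.deriv_of_isOpen hU

lemma analyticAt_iteratedDeriv {g : ℝ → ℝ} {t : ℝ} (hg : AnalyticAt ℝ g t) (n : ℕ) :
    AnalyticAt ℝ (iteratedDeriv n g) t := by
  obtain ⟨U, hU, hUopen, htU⟩ := eventually_nhds_iff.1 hg.eventually_analyticAt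
  exact analyticOnNhd_iteratedDeriv (fun y hy => hU y hy) hUopen n t htU

/-- All derivatives vanish implies eventually zero; contrapositive. -/
lemma exists_iteratedDeriv_ne_zero {g : ℝ → ℝ} {a : ℝ} (hg : AnalyticAt ℝ g a)
    (h : ¬ ∀ᶠ t in nhds a, g t = 0) : ∃ m : ℕ, iteratedDeriv m g a ≠ 0 := by
  by_contra hc
  push_neg at hc
  obtain ⟨p, hp⟩ := hg
  apply h
  rw [hp.locally_zero_iff]
  ext n v
  obtain ⟨r, hpr⟩ := hp
  have h1 : ((n.factorial : ℕ) : ℝ) • p n (fun _ => (1:ℝ)) = iteratedFDeriv ℝ n g a (fun _ => (1:ℝ)) := by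
    have := hpr.factorial_smul (1 : ℝ) n
    simpa using this
  have h2 : iteratedFDeriv ℝ n g a (fun _ => (1:ℝ)) = iteratedDeriv n g a :=
    (iteratedDeriv_eq_iteratedFDeriv).symm
  have hcoeff : p.coeff n = 0 := by
    have : ((n.factorial : ℕ) : ℝ) • p.coeff n = 0 := by
      rw [FormalMultilinearSeries.coeff]
      show ((n.factorial : ℕ) : ℝ) • p n (fun _ => (1:ℝ)) = 0
      rw [h1, h2, hc n]
    have hne : ((n.factorial : ℕ) : ℝ) ≠ 0 := Nat.cast_ne_zero.2 n.factorial_ne_zero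
    simpa [hne] using this
  have : p n = 0 := (FormalMultilinearSeries.coeff_eq_zero).1 hcoeff
  simp [this]

lemma joint_analytic (k : ℕ) (Ω : Set ((Fin k → ℝ) × ℝ)) (hΩ : IsOpen Ω)
    (f : (Fin k → ℝ) × ℝ → ℝ) (hf : AnalyticOnNhd ℝ f Ω) (m : ℕ) :
    AnalyticOnNhd ℝ (fun p => iteratedDeriv m (fun t => f (p.1, t)) p.2) Ω := by
  induction m with
  | zero => simpa [iteratedDeriv_zero] using hf
  | succ m ih =>
    have hfd : AnalyticOnNhd ℝ
        (fun p => fderiv ℝ (fun q : (Fin k → ℝ) × ℝ =>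
          iteratedDeriv m (fun t => f (q.1, t)) q.2) p ((0 : Fin k → ℝ), (1:ℝ))) Ω := by
      exact (ContinuousLinearMap.apply ℝ ℝ ((0 : Fin k → ℝ), (1:ℝ))).comp_analyticOnNhd
        (ih.fderiv_of_isOpen hΩ)
    intro p hp
    refine (hfd p hp).congr ?_
    filter_upwards [hΩ.mem_nhds hp] with q hq
    set Gm := fun p : (Fin k → ℝ) × ℝ => iteratedDeriv m (fun t => f (p.1, t)) p.2 with hGm
    have hinner : HasDerivAt (fun t : ℝ => (q.1, t)) ((0 : Fin k → ℝ), (1:ℝ)) q.2 :=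
      (hasDerivAt_const _ _).prodMk (hasDerivAt_id _)
    have hF : HasFDerivAt Gm (fderiv ℝ Gm q) q := ((ih q hq).differentiableAt).hasFDerivAt
    have hcomp : HasDerivAt (fun t : ℝ => Gm (q.1, t)) (fderiv ℝ Gm q ((0 : Fin k → ℝ), (1:ℝ))) q.2 :=
      by have := hF.comp_hasDerivAt q.2 hinner; exact this
    have hkey : (fun t : ℝ => Gm (q.1, t)) = iteratedDeriv m (fun t => f (q.1, t)) := rfl
    rw [hkey] at hcomp
    rw [iteratedDeriv_succ]
    exact hcomp.deriv.symm

lemma dist_le_of_small {g : ℝ → ℝ} {a b lam δ : ℝ} (hlam : 0 < lam)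
    (hg : ∀ t ∈ Set.Icc a b, AnalyticAt ℝ g t)
    (hd : ∀ t ∈ Set.Icc a b, lam ≤ |deriv g t|)
    {s t : ℝ} (hs : s ∈ Set.Icc a b) (hsg : |g s| ≤ δ)
    (ht : t ∈ Set.Icc a b) (htg : |g t| ≤ δ) (hst : s < t) :
    t - s ≤ 2 * δ / lam := by
  have hsub : Set.Icc s t ⊆ Set.Icc a b := Set.Icc_subset_Icc hs.1 ht.2
  have hcont : ContinuousOn g (Set.Icc s t) := fun x hx =>
    ((hg x (hsub hx)).continuousAt).continuousWithinAt
  have hder : ∀ x ∈ Set.Ioo s t, HasDerivAt g (deriv g x) x := fun x hx =>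
    ((hg x (hsub (Set.Ioo_subset_Icc_self hx))).differentiableAt).hasDerivAt
  obtain ⟨c, hc, hceq⟩ := exists_hasDerivAt_eq_slope g (deriv g) hst hcont hder
  have hlamc : lam ≤ |deriv g c| := hd c (hsub (Set.Ioo_subset_Icc_self hc))
  rw [hceq] at hlamc
  have hpos : 0 < t - s := by linarith
  have h1 : |g t - g s| ≤ 2 * δ := by
    calc |g t - g s| ≤ |g t| + |g s| := abs_sub _ _
    _ ≤ 2 * δ := by linarith
  have h2 : lam * (t - s) ≤ 2 * δ := by
    rw [abs_div, abs_of_pos hpos] at hlamc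
    have h3 := (le_div_iff₀ hpos).1 hlamc
    nlinarith
  rw [div_eq_inv_mul, le_inv_mul_iff₀ hlam]
  nlinarith

lemma diam_bound {g : ℝ → ℝ} {a b lam δ : ℝ} (hlam : 0 < lam)
    (hg : ∀ t ∈ Set.Icc a b, AnalyticAt ℝ g t)
    (hd : ∀ t ∈ Set.Icc a b, lam ≤ |deriv g t|) :
    volume {t ∈ Set.Icc a b | |g t| ≤ δ} ≤ ENNReal.ofReal (2 * δ / lam) := by
  refine le_trans (Real.volume_le_diam _) (EMetric.diam_le ?_)
  rintro s ⟨hsI, hsg⟩ t ⟨htI, htg⟩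
  rw [edist_dist, Real.dist_eq]
  apply ENNReal.ofReal_le_ofReal
  rcases lt_trichotomy s t with h | h | h
  · rw [abs_of_neg (by linarith : s - t < 0)]
    have := dist_le_of_small hlam hg hd hsI hsg htI htg h
    linarith
  · have hδ : 0 ≤ δ := le_trans (abs_nonneg _) hsg
    simp only [h, sub_self, abs_zero]
    positivity
  · rw [abs_of_pos (by linarith : 0 < s - t)]
    have := dist_le_of_small hlam hg hd htI htg hsI hsg h
    linarith

lemma sublevel (m : ℕ) (hm : 1 ≤ m) : ∀ (g : ℝ → ℝ) (a b lam ε : ℝ), 0 < lam → 0 < ε →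
    (∀ t ∈ Set.Icc a b, AnalyticAt ℝ g t) →
    (∀ t ∈ Set.Icc a b, lam ≤ |iteratedDeriv m g t|) →
    volume {t ∈ Set.Icc a b | |g t| ≤ ε} ≤
      ENNReal.ofReal ((2^(m+1) - 2) * (ε/lam) ^ (1/(m:ℝ))) := by
  induction m, hm using Nat.le_induction with
  | base =>
    intro g a b lam ε hlam hε hg hd
    have hd' : ∀ t ∈ Set.Icc a b, lam ≤ |deriv g t| := by
      intro t ht; rw [← iteratedDeriv_one]; exact hd t ht
    refine le_trans (diam_bound hlam hg hd') (ENNReal.ofReal_le_ofReal ?_)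
    have h1 : ((1:ℕ):ℝ) = 1 := by norm_num
    rw [h1, div_one, Real.rpow_one, mul_div_assoc]
    nlinarith [div_nonneg hε.le hlam.le]
  | succ m hm ih =>
    intro g a b lam ε hlam hε hg hd
    have hmR : (0:ℝ) < m := by exact_mod_cast hm
    set x := ε / lam with hxdef
    have hxpos : 0 < x := div_pos hε hlam
    set y := x ^ (1/((m:ℝ)+1)) with hydef
    have hypos : 0 < y := Real.rpow_pos_of_pos hxpos _
    set δ := lam * y with hδdef
    have hδpos : 0 < δ := mul_pos hlam hypos
    set g1 := iteratedDeriv m g with hg1def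
    have hg1 : ∀ t ∈ Set.Icc a b, AnalyticAt ℝ g1 t := fun t ht =>
      analyticAt_iteratedDeriv (hg t ht) m
    have hDeq : deriv g1 = iteratedDeriv (m+1) g := by rw [hg1def, ← iteratedDeriv_succ]
    have hd1 : ∀ t ∈ Set.Icc a b, lam ≤ |deriv g1 t| := by
      intro t ht; rw [hDeq]; exact hd t ht
    have hcontg1 : ContinuousOn g1 (Set.Icc a b) := fun t ht =>
      (hg1 t ht).continuousAt.continuousWithinAt
    have hcontD : ContinuousOn (deriv g1) (Set.Icc a b) := by
      rw [hDeq]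
      exact fun t ht =>
        (analyticAt_iteratedDeriv (hg t ht) (m+1)).continuousAt.continuousWithinAt
    -- sign of derivative is constant, hence g1 monotone or antitone
    have hmono : MonotoneOn g1 (Set.Icc a b) ∨ AntitoneOn g1 (Set.Icc a b) := by
      have hsign : (∀ t ∈ Set.Icc a b, 0 < deriv g1 t) ∨
          (∀ t ∈ Set.Icc a b, deriv g1 t < 0) := by
        by_contra hcon
        push_neg at hcon
        obtain ⟨⟨u, hu, hu0⟩, ⟨v, hv, hv0⟩⟩ := hcon
        have huv : Set.uIcc u v ⊆ Set.Icc a b := Set.uIcc_subset_Icc hu hv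
        have h0mem : (0:ℝ) ∈ Set.uIcc (deriv g1 u) (deriv g1 v) :=
          Set.mem_uIcc.2 (Or.inl ⟨hu0, hv0⟩)
        obtain ⟨z, hz, hz0⟩ := intermediate_value_uIcc (hcontD.mono huv) h0mem
        have := hd1 z (huv hz)
        rw [hz0] at this
        simp at this
        linarith
      rcases hsign with h | h
      · exact Or.inl ((strictMonoOn_of_deriv_pos (convex_Icc a b) hcontg1
          (fun t ht => h t (interior_subset ht))).monotoneOn)
      · exact Or.inr ((strictAntiOn_of_deriv_neg (convex_Icc a b) hcontg1
          (fun t ht => h t (interior_subset ht))).antitoneOn)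
    set E := {t ∈ Set.Icc a b | |g t| ≤ ε} with hEdef
    set J := {t ∈ Set.Icc a b | |g1 t| ≤ δ} with hJdef
    set Kp := {t ∈ Set.Icc a b | δ ≤ g1 t} with hKpdef
    set Km := {t ∈ Set.Icc a b | g1 t ≤ -δ} with hKmdef
    have hEsub : E ⊆ J ∪ ((E ∩ Kp) ∪ (E ∩ Km)) := by
      rintro t ⟨ht, htg⟩
      by_cases h1 : |g1 t| ≤ δ
      · exact Or.inl ⟨ht, h1⟩
      · push_neg at h1
        rcases le_or_gt 0 (g1 t) with h2 | h2
        · exact Or.inr (Or.inl ⟨⟨ht, htg⟩, ht, by rw [abs_of_nonneg h2] at h1; linarith⟩)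
        · exact Or.inr (Or.inr ⟨⟨ht, htg⟩, ht, by rw [abs_of_neg h2] at h1; linarith⟩)
    -- bound for order-convex pieces where |g1| ≥ δ
    have hKbound : ∀ K : Set ℝ, K ⊆ Set.Icc a b → IsClosed K →
        (∀ s u t, s ∈ K → t ∈ K → u ∈ Set.Icc a b → s ≤ u → u ≤ t → u ∈ K) →
        (∀ t ∈ K, δ ≤ |g1 t|) →
        volume (E ∩ K) ≤ ENNReal.ofReal ((2^(m+1) - 2) * (ε/δ) ^ (1/(m:ℝ))) := by
      intro K hK hKcl hKbetween hKd
      rcases K.eq_empty_or_nonempty with rfl | hne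
      · simp
      have hbddB : BddBelow K := (bddBelow_Icc : BddBelow (Set.Icc a b)).mono hK
      have hbddA : BddAbove K := (bddAbove_Icc : BddAbove (Set.Icc a b)).mono hK
      set c := sInf K with hcdef
      set d := sSup K with hddef
      have hcK : c ∈ K := hKcl.csInf_mem hne hbddB
      have hdK : d ∈ K := hKcl.csSup_mem hne hbddA
      have hKsub2 : K ⊆ Set.Icc c d := fun u hu => ⟨csInf_le hbddB hu, le_csSup hbddA hu⟩
      have hIccsub : Set.Icc c d ⊆ Set.Icc a b :=
        Set.Icc_subset_Icc (hK hcK).1 (hK hdK).2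
      have hIccK : Set.Icc c d ⊆ K := fun u hu =>
        hKbetween c u d hcK hdK (hIccsub hu) hu.1 hu.2
      have hsub : E ∩ K ⊆ {t ∈ Set.Icc c d | |g t| ≤ ε} := by
        rintro t ⟨⟨_, htg⟩, htK⟩
        exact ⟨hKsub2 htK, htg⟩
      refine le_trans (measure_mono hsub) ?_
      refine ih g c d δ ε hδpos hε (fun t ht => hg t (hIccsub ht)) ?_
      intro t ht
      exact hKd t (hIccK ht)
    have hKpvol : volume (E ∩ Kp) ≤ ENNReal.ofReal ((2^(m+1) - 2) * (ε/δ) ^ (1/(m:ℝ))) := by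
      refine hKbound Kp (fun t ht => ht.1) ?_ ?_ ?_
      · exact (hcontg1.preimage_isClosed_of_isClosed isClosed_Icc isClosed_Ici)
      · rintro s u t ⟨hs, hsg⟩ ⟨ht, htg⟩ hu hsu hut
        refine ⟨hu, ?_⟩
        rcases hmono with h | h
        · exact le_trans hsg (h hs hu hsu)
        · exact le_trans htg (h hu ht hut)
      · rintro t ⟨ht, htg⟩
        exact le_trans htg (le_abs_self _)
    have hKmvol : volume (E ∩ Km) ≤ ENNReal.ofReal ((2^(m+1) - 2) * (ε/δ) ^ (1/(m:ℝ))) := by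
      refine hKbound Km (fun t ht => ht.1) ?_ ?_ ?_
      · exact (hcontg1.preimage_isClosed_of_isClosed isClosed_Icc isClosed_Iic)
      · rintro s u t ⟨hs, hsg⟩ ⟨ht, htg⟩ hu hsu hut
        refine ⟨hu, ?_⟩
        rcases hmono with h | h
        · exact le_trans (h hu ht hut) htg
        · exact le_trans (h hs hu hsu) hsg
      · rintro t ⟨ht, htg⟩
        exact le_abs.2 (Or.inr (by linarith))
    have hJvol : volume J ≤ ENNReal.ofReal (2 * δ / lam) := diam_bound hlam hg1 hd1
    have htotal : volume E ≤ ENNReal.ofReal (2 * δ / lam) +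
        (ENNReal.ofReal ((2^(m+1) - 2) * (ε/δ) ^ (1/(m:ℝ))) +
         ENNReal.ofReal ((2^(m+1) - 2) * (ε/δ) ^ (1/(m:ℝ)))) := by
      refine le_trans (measure_mono hEsub) ?_
      refine le_trans (measure_union_le _ _) ?_
      refine add_le_add hJvol ?_
      exact le_trans (measure_union_le _ _) (add_le_add hKpvol hKmvol)
    -- arithmetic
    have hBnn : 0 ≤ (2^(m+1) - 2 : ℝ) * (ε/δ) ^ (1/(m:ℝ)) := by
      apply mul_nonneg
      · have h21 : (2:ℝ)^1 ≤ 2^(m+1) := pow_le_pow_right₀ one_le_two (by omega)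
        norm_num at h21
        linarith
      · positivity
    have hεδ : ε / δ = x ^ ((1:ℝ) - 1/((m:ℝ)+1)) := by
      rw [hδdef, ← div_div, ← hxdef, Real.rpow_sub hxpos, Real.rpow_one, hydef]
    have hkey : (ε/δ) ^ (1/(m:ℝ)) = y := by
      rw [hεδ, ← Real.rpow_mul hxpos.le, hydef]
      congr 1
      have hm0 : (m:ℝ) ≠ 0 := ne_of_gt hmR
      field_simp
      ring
    refine le_trans htotal ?_
    rw [hkey]
    have hnn1 : (0:ℝ) ≤ 2 * δ / lam := by positivity
    have hBy : 0 ≤ (2^(m+1) - 2 : ℝ) * y := by rw [← hkey]; exact hBnn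
    rw [← ENNReal.ofReal_add hBy hBy, ← ENNReal.ofReal_add hnn1 (by linarith)]
    apply ENNReal.ofReal_le_ofReal
    have hcast : (((m+1:ℕ)):ℝ) = (m:ℝ)+1 := by push_cast; ring
    rw [hcast, ← hydef]
    have hδlam : 2 * δ / lam = 2 * y := by
      rw [hδdef]; field_simp
    rw [hδlam]
    have h2 : (2:ℝ)^(m+1+1) = 2 * 2^(m+1) := by rw [pow_succ]; ring
    rw [h2]
    apply le_of_eq
    ring

/-- Uniform one-variable Łojasiewicz estimate. We model `ℝⁿ` as `(Fin k → ℝ) × ℝ`,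
writing `x = (xh, xₙ)`, and `G = [−M, M]ⁿ`. -/
theorem stmt_3 (k : ℕ) (M : ℝ) (hM : 0 < M) (Ω : Set ((Fin k → ℝ) × ℝ))
    (hΩ_open : IsOpen Ω)
    (hGΩ : (Set.univ.pi fun _ : Fin k => Set.Icc (-M) M) ×ˢ Set.Icc (-M) M ⊆ Ω)
    (f : (Fin k → ℝ) × ℝ → ℝ) (hf : AnalyticOnNhd ℝ f Ω)
    (hne : ∀ p ∈ Ω, ¬ (∀ᶠ h in nhds (0 : ℝ), f (p.1, p.2 + h) = 0)) :
    ∃ ε₀ > (0 : ℝ), ∃ m : ℕ, 1 ≤ m ∧ ∀ ε : ℝ, 0 < ε → ε < ε₀ →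
      ∀ xh ∈ Set.univ.pi fun _ : Fin k => Set.Icc (-M) M,
        volume {t ∈ Set.Icc (-M) M | |f (xh, t)| < ε}
          ≤ ENNReal.ofReal ((ε / ε₀) ^ (1 / (m : ℝ))) := by
  classical
  set box := (Set.univ.pi fun _ : Fin k => Set.Icc (-M) M) ×ˢ Set.Icc (-M) M with hboxdef
  have hcompact : IsCompact box := (isCompact_univ_pi (fun _ => isCompact_Icc)).prod isCompact_Icc
  -- pointwise data
  have hpoint : ∀ p ∈ box, ∃ (mp : ℕ) (c r : ℝ) (U : Set (Fin k → ℝ)),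
      0 < c ∧ 0 < r ∧ IsOpen U ∧ p.1 ∈ U ∧
      (U ×ˢ Set.Icc (p.2 - r) (p.2 + r)) ⊆ Ω ∧
      ∀ q ∈ U ×ˢ Set.Icc (p.2 - r) (p.2 + r),
        c ≤ |iteratedDeriv mp (fun s => f (q.1, s)) q.2| := by
    intro p hp
    have hpΩ : p ∈ Ω := hGΩ hp
    have hslice : AnalyticAt ℝ (fun t => f (p.1, t)) p.2 :=
      (hf p hpΩ).comp ((analyticAt_const).prod (analyticAt_id))
    have hnev : ¬ ∀ᶠ t in nhds p.2, f (p.1, t) = 0 := by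
      intro hcon
      apply hne p hpΩ
      have htend : Tendsto (fun h : ℝ => p.2 + h) (nhds 0) (nhds p.2) := by
        have := (tendsto_const_nhds (x := p.2) (f := nhds (0:ℝ))).add tendsto_id
        simpa using this
      exact htend.eventually hcon
    obtain ⟨mp, hmp⟩ := exists_iteratedDeriv_ne_zero hslice hnev
    set G := fun q : (Fin k → ℝ) × ℝ => iteratedDeriv mp (fun s => f (q.1, s)) q.2 with hGdef
    have hGan := joint_analytic k Ω hΩ_open f hf mp
    have hcont : ContinuousAt (fun q => |G q|) p := (hGan p hpΩ).continuousAt.abs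
    set c := |G p| / 2 with hcdef
    have hGp : G p = iteratedDeriv mp (fun t => f (p.1, t)) p.2 := rfl
    have habs : 0 < |G p| := abs_pos.2 (by rw [hGp]; exact hmp)
    have hcpos : 0 < c := by rw [hcdef]; positivity
    have hclt : c < |G p| := by rw [hcdef]; linarith
    have hev1 : ∀ᶠ q in nhds p, c < |G q| := hcont (Ioi_mem_nhds hclt)
    have hev2 : ∀ᶠ q in nhds p, q ∈ Ω := hΩ_open.mem_nhds hpΩ
    have hev : ∀ᶠ q in nhds p, c < |G q| ∧ q ∈ Ω := hev1.and hev2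
    obtain ⟨u, v, huo, hpu, hvo, hpv, huv⟩ := mem_nhds_prod_iff'.1 hev
    obtain ⟨rr, hrr, hball⟩ := Metric.isOpen_iff.1 hvo p.2 hpv
    refine ⟨mp, c, rr/2, u, hcpos, by positivity, huo, hpu, ?_, ?_⟩
    · intro q hq
      have hqv : q ∈ u ×ˢ v := ⟨hq.1, hball ?_⟩
      · exact (huv hqv).2
      · have := hq.2
        rw [Metric.mem_ball, Real.dist_eq]
        rw [Set.mem_Icc] at this
        rw [abs_lt]
        constructor <;> linarith
    · intro q hq
      have hqv : q ∈ u ×ˢ v := ⟨hq.1, hball ?_⟩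
      · exact le_of_lt (huv hqv).1
      · have := hq.2
        rw [Metric.mem_ball, Real.dist_eq]
        rw [Set.mem_Icc] at this
        rw [abs_lt]
        constructor <;> linarith
  choose! mfun cfun rfun Ufun hcpos hrpos hUopen hpU hsubΩ hbound using hpoint
  set W : (Fin k → ℝ) × ℝ → Set ((Fin k → ℝ) × ℝ) :=
    fun p => (Ufun p) ×ˢ Set.Ioo (p.2 - rfun p) (p.2 + rfun p) with hWdef
  obtain ⟨T, hTmem, hTcov⟩ := hcompact.elim_nhds_subcover W (fun p hp =>
    ((hUopen p hp).prod isOpen_Ioo).mem_nhds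
      ⟨hpU p hp, by simp only [Set.mem_Ioo]; constructor <;> linarith [hrpos p hp]⟩)
  have hTne : T.Nonempty := by
    have h0 : (0:ℝ) ∈ Set.Icc (-M) M := Set.mem_Icc.2 ⟨by linarith, by linarith⟩
    have h0box : ((fun _ => 0, 0) : (Fin k → ℝ) × ℝ) ∈ box := ⟨fun i _ => h0, h0⟩
    obtain ⟨i, hi⟩ := Set.mem_iUnion₂.1 (hTcov h0box)
    exact ⟨i, hi.1⟩
  set mtop := T.sup mfun with hmtopdef
  set m := max 1 mtop with hmdef
  have hm1 : 1 ≤ m := le_max_left _ _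
  set lam := T.inf' hTne cfun with hlamdef
  have hlampos : 0 < lam := Finset.lt_inf'_iff hTne |>.2 (fun i hi => hcpos i (hTmem i hi))
  set N := T.card with hNdef
  set D := ((N : ℝ) + 1) * 2^(m+1) with hDdef
  have hD2 : 2 ≤ D := by
    rw [hDdef]
    have h1 : (1:ℝ) ≤ (N:ℝ) + 1 := by
      have := Nat.cast_nonneg (α := ℝ) N; linarith
    have h2 : (2:ℝ) ≤ 2^(m+1) := by
      calc (2:ℝ) = 2^1 := by norm_num
      _ ≤ 2^(m+1) := pow_le_pow_right₀ one_le_two (by omega)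
    nlinarith
  have hDpos : 0 < D := by linarith
  set ε₀ := lam / D^m with hε₀def
  have hε₀pos : 0 < ε₀ := by rw [hε₀def]; positivity
  have hDm1 : 1 ≤ D^m := one_le_pow₀ (by linarith)
  have hε₀lam : ε₀ ≤ lam := by
    rw [hε₀def]
    exact div_le_self hlampos.le hDm1
  refine ⟨ε₀, hε₀pos, m, hm1, ?_⟩
  intro ε hε hεlt xh hxh
  have hεlam : ε < lam := lt_of_lt_of_le hεlt hε₀lam
  set x := ε / lam with hxdef
  have hxpos : 0 < x := div_pos hε hlampos
  have hxle1 : x ≤ 1 := by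
    rw [hxdef, div_le_one hlampos]; linarith
  set B := ENNReal.ofReal ((2:ℝ)^(m+1) * x ^ (1/(m:ℝ))) with hBdef
  set E := {t ∈ Set.Icc (-M) M | |f (xh, t)| < ε} with hEdef
  set T' := T.filter (fun i => xh ∈ Ufun i) with hT'def
  set S : (Fin k → ℝ) × ℝ → Set ℝ :=
    fun p => {s ∈ Set.Icc (p.2 - rfun p) (p.2 + rfun p) | |f (xh, s)| ≤ ε} with hSdef
  have hEcov : E ⊆ ⋃ i ∈ T', S i := by
    rintro s ⟨hsI, hsf⟩
    have hsbox : ((xh, s) : (Fin k → ℝ) × ℝ) ∈ box := ⟨hxh, hsI⟩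
    obtain ⟨i, hi⟩ := Set.mem_iUnion₂.1 (hTcov hsbox)
    obtain ⟨hiT, hiW⟩ := hi
    refine Set.mem_iUnion₂.2 ⟨i, ?_, ?_⟩
    · exact Finset.mem_filter.2 ⟨hiT, hiW.1⟩
    · exact ⟨Set.Ioo_subset_Icc_self hiW.2, hsf.le⟩
  have hpiece : ∀ i ∈ T', volume (S i) ≤ B := by
    intro i hiT'
    obtain ⟨hiT, hixh⟩ := Finset.mem_filter.1 hiT'
    have hibox : i ∈ box := hTmem i hiT
    have hmi_le : mfun i ≤ m := le_trans (Finset.le_sup hiT) (le_max_right _ _)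
    have hlamci : lam ≤ cfun i := Finset.inf'_le _ hiT
    have hslice_an : ∀ t ∈ Set.Icc (i.2 - rfun i) (i.2 + rfun i),
        AnalyticAt ℝ (fun s => f (xh, s)) t := by
      intro t ht
      have hmem : ((xh, t) : (Fin k → ℝ) × ℝ) ∈ Ufun i ×ˢ Set.Icc (i.2 - rfun i) (i.2 + rfun i) :=
        ⟨hixh, ht⟩
      exact (hf _ (hsubΩ i hibox hmem)).comp ((analyticAt_const).prod (analyticAt_id))
    have hslice_bd : ∀ t ∈ Set.Icc (i.2 - rfun i) (i.2 + rfun i),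
        cfun i ≤ |iteratedDeriv (mfun i) (fun s => f (xh, s)) t| := by
      intro t ht
      exact hbound i hibox (xh, t) ⟨hixh, ht⟩
    rcases Nat.eq_zero_or_pos (mfun i) with hmi0 | hmi1
    · have hempty : S i = ∅ := by
        rw [Set.eq_empty_iff_forall_notMem]
        rintro s ⟨hsI, hsf⟩
        have h1 := hslice_bd s hsI
        rw [hmi0, iteratedDeriv_zero] at h1
        have : ε < cfun i := lt_of_lt_of_le hεlam hlamci
        linarith
      rw [hempty]
      simp
    · have hsub := sublevel (mfun i) hmi1 (fun s => f (xh, s))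
        (i.2 - rfun i) (i.2 + rfun i) (cfun i) ε (hcpos i hibox) hε hslice_an hslice_bd
      refine le_trans hsub (ENNReal.ofReal_le_ofReal ?_)
      have hmiR : (0:ℝ) < mfun i := by exact_mod_cast hmi1
      have hmR : (0:ℝ) < m := by exact_mod_cast Nat.lt_of_lt_of_le Nat.zero_lt_one hm1
      have h1 : (ε / cfun i) ^ (1/((mfun i : ℕ):ℝ)) ≤ x ^ (1/((mfun i : ℕ):ℝ)) :=
        Real.rpow_le_rpow (div_nonneg hε.le (hcpos i hibox).le)
          (by rw [hxdef]; exact div_le_div_of_nonneg_left hε.le hlampos hlamci)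
          (by positivity)
      have h2 : x ^ (1/((mfun i : ℕ):ℝ)) ≤ x ^ (1/(m:ℝ)) := by
        apply Real.rpow_le_rpow_of_exponent_ge hxpos hxle1
        rw [div_le_div_iff₀ hmR hmiR]
        have : ((mfun i : ℕ):ℝ) ≤ (m:ℝ) := by exact_mod_cast hmi_le
        linarith
      have h3 : ((2:ℝ)^(mfun i + 1) - 2) ≤ 2^(m+1) := by
        have : (2:ℝ)^(mfun i + 1) ≤ 2^(m+1) := pow_le_pow_right₀ one_le_two (by omega)
        linarith
      have h4 : (0:ℝ) ≤ (2:ℝ)^(mfun i + 1) - 2 := by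
        have : (2:ℝ)^1 ≤ 2^(mfun i + 1) := pow_le_pow_right₀ one_le_two (by omega)
        norm_num at this
        linarith
      calc ((2:ℝ)^(mfun i + 1) - 2) * (ε / cfun i) ^ (1/((mfun i : ℕ):ℝ))
          ≤ ((2:ℝ)^(mfun i + 1) - 2) * (x ^ (1/(m:ℝ))) := by
            apply mul_le_mul_of_nonneg_left (le_trans h1 h2) h4
        _ ≤ (2:ℝ)^(m+1) * x ^ (1/(m:ℝ)) := by
            apply mul_le_mul_of_nonneg_right h3 (by positivity)
  calc volume E ≤ volume (⋃ i ∈ T', S i) := measure_mono hEcov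
    _ ≤ ∑ i ∈ T', volume (S i) := measure_biUnion_finset_le _ _
    _ ≤ ∑ _i ∈ T', B := Finset.sum_le_sum hpiece
    _ = T'.card • B := by rw [Finset.sum_const]
    _ ≤ ENNReal.ofReal ((ε / ε₀) ^ (1 / (m : ℝ))) := by
        have hcard : T'.card ≤ N := by
          rw [hNdef, hT'def]
          exact Finset.card_filter_le _ _
        have hb0 : (0:ℝ) ≤ (2:ℝ)^(m+1) * x ^ (1/(m:ℝ)) := by positivity
        have hsmul : T'.card • B ≤ ENNReal.ofReal (((N:ℝ)+1) * ((2:ℝ)^(m+1) * x ^ (1/(m:ℝ)))) := by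
          rw [hBdef, nsmul_eq_mul, ← ENNReal.ofReal_natCast (T'.card), ← ENNReal.ofReal_mul (by positivity)]
          apply ENNReal.ofReal_le_ofReal
          apply mul_le_mul_of_nonneg_right ?_ hb0
          have : ((T'.card : ℕ):ℝ) ≤ (N:ℝ) := by exact_mod_cast hcard
          linarith
        refine le_trans hsmul (ENNReal.ofReal_le_ofReal ?_)
        -- (N+1) * 2^(m+1) * x^(1/m) = D * x^(1/m) = (ε/ε₀)^(1/m)
        have hmR : (0:ℝ) < m := by exact_mod_cast Nat.lt_of_lt_of_le Nat.zero_lt_one hm1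
        have hεε₀ : ε / ε₀ = D^m * x := by
          rw [hε₀def, hxdef]
          field_simp
        rw [hεε₀, Real.mul_rpow (by positivity) hxpos.le]
        have hDm : ((D^m : ℝ)) ^ (1/(m:ℝ)) = D := by
          rw [← Real.rpow_natCast D m, ← Real.rpow_mul hDpos.le]
          rw [mul_one_div, div_self (ne_of_gt hmR), Real.rpow_one]
        rw [hDm, hDdef]
        apply le_of_eq
        ring
end

section
/- (First-order expansion of the Floquet discriminant in the coupling constant.) Let E > 0 and let w : ℝ → ℝ be continuous, 1-periodic and bounded. For λ ∈ ℝ, let Φ_λ and Ψ_λ be the unique C² solutions of y''(x) = (λ w(x) − E) y(x) on ℝ with Φ_λ(0) = 1, Φ_λ'(0) = 0, Ψ_λ(0) = 0, Ψ_λ'(0) = 1, and define the discriminant D(λ) := Φ_λ(1) + Ψ_λ'(1). Then D(0) = 2 cos(√E), the function λ ↦ D(λ) is differentiable at λ = 0, and D'(0) = (sin(√E)/√E) ∫₀¹ w(s) ds; equivalently, D(λ) = 2 cos(√E) + λ (∫₀¹ w(s) ds) · sin(√E)/√E + o(λ) as λ → 0. -/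
/-!
Write `r = √E`. Variation of constants for `u'' + r² u = λ w u` gives
`u(x) = u(0) cos rx + u'(0) sin rx / r + λ ∫₀ˣ sin (r (x - σ)) / r · w(σ) u(σ) dσ`
and the analogous formula for `u'`, so that `D(λ) = 2 cos r + λ S(λ)` with
`S(λ) = ∫₀¹ w(σ) (sin (r (1 - σ)) / r · Φ_λ(σ) + cos (r (1 - σ)) · Ψ_λ(σ)) dσ`.
The same formula, together with a bootstrap on `sup_{[0,1]} |u|`, shows that `Φ_λ` and `Ψ_λ` are
`O(λ)`-close on `[0, 1]` to the free solutions `cos rx` and `sin rx / r`. Hence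
`S(λ) → S(0) = (sin r / r) ∫₀¹ w`, since `sin (r (1 - σ)) cos rσ + cos (r (1 - σ)) sin rσ = sin r`.
-/

open Real intervalIntegral Set Filter Topology

theorem hasDerivAt_of_eq_add_mul {f g : ℝ → ℝ} {a c : ℝ} (hfg : ∀ x, f x = f a + (x - a) * g x)
    (hg : Tendsto g (𝓝[≠] a) (𝓝 c)) : HasDerivAt f c a := by
  rw [hasDerivAt_iff_tendsto_slope]
  refine hg.congr' (eventually_nhdsWithin_of_forall fun x (hx : x ≠ a) => ?_)
  rw [slope_def_field, hfg x, add_sub_cancel_left, mul_div_cancel_left₀ _ (sub_ne_zero.2 hx)]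

theorem abs_sin_div_le_one_div (a : ℝ) {r : ℝ} (hr : 0 < r) : |sin a / r| ≤ 1 / r := by
  rw [abs_div, abs_of_pos hr]
  exact div_le_div_of_nonneg_right (abs_sin_le_one a) hr.le

theorem abs_intervalIntegral_le_of_forall_Icc {f : ℝ → ℝ} {K x : ℝ} (hx : x ∈ Icc (0 : ℝ) 1)
    (hf : ∀ σ ∈ Icc (0 : ℝ) 1, |f σ| ≤ K) : |∫ σ in 0..x, f σ| ≤ K := by
  have hK : 0 ≤ K := (abs_nonneg _).trans (hf 0 (by norm_num))
  calc |∫ σ in 0..x, f σ| ≤ K * |x - 0| :=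
        norm_integral_le_of_norm_le_const (f := f) fun σ hσ => by
          rw [uIoc_of_le hx.1] at hσ
          exact hf σ ⟨hσ.1.le, hσ.2.trans hx.2⟩
    _ ≤ K * 1 := by
        rw [sub_zero, abs_of_nonneg hx.1]
        exact mul_le_mul_of_nonneg_left hx.2 hK
    _ = K := mul_one K

theorem abs_sub_le_of_abs_sub_le_mul_bound {s : Set ℝ} (hs : IsCompact s) {u v : ℝ → ℝ}
    (hu : ContinuousOn u s) {ε N : ℝ} (hε : 0 ≤ ε) (hε_half : 2 * ε ≤ 1)
    (hv : ∀ x ∈ s, |v x| ≤ N)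
    (huv : ∀ M, (∀ y ∈ s, |u y| ≤ M) → ∀ x ∈ s, |u x - v x| ≤ ε * M) :
    ∀ x ∈ s, |u x - v x| ≤ 2 * ε * N := by
  intro x hx
  obtain ⟨x₀, hx₀, hmax⟩ := hs.exists_isMaxOn ⟨x, hx⟩ (continuous_abs.comp_continuousOn hu)
  have hM : ∀ y ∈ s, |u y| ≤ |u x₀| := fun y hy => hmax hy
  have hMN : |u x₀| ≤ ε * |u x₀| + N := by
    have := abs_sub_abs_le_abs_sub (u x₀) (v x₀)
    linarith [huv _ hM x₀ hx₀, hv x₀ hx₀]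
  have hM2N : |u x₀| ≤ 2 * N := by nlinarith [abs_nonneg (u x₀)]
  calc |u x - v x| ≤ ε * |u x₀| := huv _ hM x hx
    _ ≤ ε * (2 * N) := mul_le_mul_of_nonneg_left hM2N hε
    _ = 2 * ε * N := by ring

theorem variation_of_constants {r : ℝ} (hr : r ≠ 0) {u f : ℝ → ℝ} (hu : ContDiff ℝ 2 u)
    (hf : Continuous f) (hode : ∀ x, deriv (deriv u) x + r ^ 2 * u x = f x) (x : ℝ) :
    u x = u 0 * cos (r * x) + deriv u 0 * (sin (r * x) / r)
        + ∫ σ in 0..x, sin (r * (x - σ)) / r * f σ ∧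
      deriv u x = -(u 0 * (r * sin (r * x))) + deriv u 0 * cos (r * x)
        + ∫ σ in 0..x, cos (r * (x - σ)) * f σ := by
  have hu' : ∀ t, HasDerivAt u (deriv u t) t := fun t =>
    (hu.differentiable (by norm_num) t).hasDerivAt
  have hu'' : ∀ t, HasDerivAt (deriv u) (deriv (deriv u) t) t := fun t =>
    ((hu.iterate_deriv' 1 1).differentiable (by norm_num) t).hasDerivAt
  have hcos : ∀ t, HasDerivAt (fun t => cos (r * t)) (-(sin (r * t) * r)) t := fun t => by
    simpa using ((hasDerivAt_id t).const_mul r).cos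
  have hsin : ∀ t, HasDerivAt (fun t => sin (r * t)) (cos (r * t) * r) t := fun t => by
    simpa using ((hasDerivAt_id t).const_mul r).sin
  -- `u = A cos (r·) + B sin (r·)` for the `A`, `B` below, whose derivatives involve only `f`
  have hA : ∀ t, HasDerivAt (fun t => u t * cos (r * t) - deriv u t * sin (r * t) / r)
      (-(sin (r * t) / r * f t)) t := fun t => by
    refine (((hu' t).mul (hcos t)).sub (((hu'' t).mul (hsin t)).div_const r)).congr_deriv ?_
    rw [← hode t]; field_simp; ring
  have hB : ∀ t, HasDerivAt (fun t => u t * sin (r * t) + deriv u t * cos (r * t) / r)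
      (cos (r * t) / r * f t) t := fun t => by
    refine (((hu' t).mul (hsin t)).add (((hu'' t).mul (hcos t)).div_const r)).congr_deriv ?_
    rw [← hode t]; field_simp; ring
  have hfi : ∀ g : ℝ → ℝ, Continuous g →
      IntervalIntegrable (fun σ => g σ * f σ) MeasureTheory.volume 0 x :=
    fun g hg => (hg.mul hf).intervalIntegrable _ _
  have eA := integral_eq_sub_of_hasDerivAt (fun t _ => hA t) (hfi _ (by fun_prop)).neg
  have eB := integral_eq_sub_of_hasDerivAt (fun t _ => hB t) (hfi _ (by fun_prop))
  simp only [integral_neg, mul_zero, cos_zero, sin_zero, zero_div, mul_one, sub_zero] at eA eB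
  have hconv_sin : ∫ σ in 0..x, sin (r * (x - σ)) / r * f σ
      = sin (r * x) * (∫ σ in 0..x, cos (r * σ) / r * f σ)
        - cos (r * x) * ∫ σ in 0..x, sin (r * σ) / r * f σ := by
    rw [← integral_const_mul, ← integral_const_mul,
      ← integral_sub ((hfi _ (by fun_prop)).const_mul _) ((hfi _ (by fun_prop)).const_mul _)]
    refine integral_congr fun σ _ => ?_
    simp only [mul_sub, sin_sub]
    ring
  have hconv_cos : ∫ σ in 0..x, cos (r * (x - σ)) * f σ
      = r * cos (r * x) * (∫ σ in 0..x, cos (r * σ) / r * f σ)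
        + r * sin (r * x) * ∫ σ in 0..x, sin (r * σ) / r * f σ := by
    rw [← integral_const_mul, ← integral_const_mul,
      ← integral_add ((hfi _ (by fun_prop)).const_mul _) ((hfi _ (by fun_prop)).const_mul _)]
    refine integral_congr fun σ _ => ?_
    simp only [mul_sub, cos_sub]
    field_simp
  rw [hconv_sin, hconv_cos]
  constructor
  · linear_combination
      (-cos (r * x)) * eA - sin (r * x) * eB - u x * sin_sq_add_cos_sq (r * x)
  · linear_combination r * sin (r * x) * eA - r * cos (r * x) * eB
      - deriv u x * sin_sq_add_cos_sq (r * x)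
      - (deriv u x * (sin (r * x) ^ 2 + cos (r * x) ^ 2) - deriv u 0 * cos (r * x))
        * mul_inv_cancel₀ hr

theorem abs_sub_free_solution_le {r C lam : ℝ} (hr : 0 < r) {w u : ℝ → ℝ} (hw : Continuous w)
    (hwC : ∀ x ∈ Icc (0 : ℝ) 1, |w x| ≤ C) (hu : ContDiff ℝ 2 u)
    (hode : ∀ x, deriv (deriv u) x = (lam * w x - r ^ 2) * u x) (hsmall : 2 * |lam| * C ≤ r)
    {x : ℝ} (hx : x ∈ Icc (0 : ℝ) 1) :
    |u x - (u 0 * cos (r * x) + deriv u 0 * (sin (r * x) / r))|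
      ≤ 2 * (|lam| * C / r) * (|u 0| + |deriv u 0| / r) := by
  have hC : 0 ≤ C := (abs_nonneg _).trans (hwC 0 (by norm_num))
  refine abs_sub_le_of_abs_sub_le_mul_bound (ε := |lam| * C / r)
    (v := fun y => u 0 * cos (r * y) + deriv u 0 * (sin (r * y) / r)) isCompact_Icc
    hu.continuous.continuousOn (by positivity)
    (by rw [← mul_div_assoc, div_le_one hr]; linarith) (fun y _ => ?_) (fun M hM y hy => ?_) x hx
  · calc |u 0 * cos (r * y) + deriv u 0 * (sin (r * y) / r)|
        ≤ |u 0| * 1 + |deriv u 0| * (1 / r) := by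
          refine (abs_add_le _ _).trans (add_le_add ?_ ?_) <;> rw [abs_mul]
          · exact mul_le_mul_of_nonneg_left (abs_cos_le_one _) (abs_nonneg _)
          · exact mul_le_mul_of_nonneg_left (abs_sin_div_le_one_div _ hr) (abs_nonneg _)
      _ = |u 0| + |deriv u 0| / r := by ring
  · have hduh := (variation_of_constants hr.ne' hu (by fun_prop) (f := fun σ => lam * w σ * u σ)
      (fun x => by rw [hode]; ring) y).1
    rw [hduh, add_sub_cancel_left]
    refine abs_intervalIntegral_le_of_forall_Icc hy fun σ hσ => ?_
    rw [abs_mul, abs_mul, abs_mul, abs_div, abs_of_pos hr, div_mul_eq_mul_div,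
      div_mul_eq_mul_div, mul_comm]
    have hM0 : 0 ≤ M := (abs_nonneg _).trans (hM 0 (by norm_num))
    calc |lam| * |w σ| * |u σ| * |sin (r * (y - σ))| / r ≤ |lam| * C * M * 1 / r := by
          gcongr
          exacts [hwC σ hσ, hM σ hσ, abs_sin_le_one _]
      _ = |lam| * C * M / r := by rw [mul_one]

noncomputable def discriminantSlope (r : ℝ) (w φ ψ : ℝ → ℝ) : ℝ :=
  ∫ σ in 0..1, w σ * (sin (r * (1 - σ)) / r * φ σ + cos (r * (1 - σ)) * ψ σ)

section Discriminant

variable {r lam : ℝ} {w φ ψ : ℝ → ℝ}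

theorem discriminant_eq (hr : r ≠ 0) (hw : Continuous w)
    (hφ : ContDiff ℝ 2 φ) (hφ_ode : ∀ x, deriv (deriv φ) x = (lam * w x - r ^ 2) * φ x)
    (hφ0 : φ 0 = 1) (hφ'0 : deriv φ 0 = 0)
    (hψ : ContDiff ℝ 2 ψ) (hψ_ode : ∀ x, deriv (deriv ψ) x = (lam * w x - r ^ 2) * ψ x)
    (hψ0 : ψ 0 = 0) (hψ'0 : deriv ψ 0 = 1) :
    φ 1 + deriv ψ 1 = 2 * cos r + lam * discriminantSlope r w φ ψ := by
  have hφ1 := (variation_of_constants hr hφ (f := fun σ => lam * w σ * φ σ) (by fun_prop)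
    (fun x => by rw [hφ_ode]; ring) 1).1
  have hψ1 := (variation_of_constants hr hψ (f := fun σ => lam * w σ * ψ σ) (by fun_prop)
    (fun x => by rw [hψ_ode]; ring) 1).2
  have hφc : Continuous φ := hφ.continuous
  have hψc : Continuous ψ := hψ.continuous
  rw [hφ1, hψ1, hφ0, hφ'0, hψ0, hψ'0, discriminantSlope, ← integral_const_mul,
    add_add_add_comm, ← integral_add (by apply Continuous.intervalIntegrable; fun_prop)
      (by apply Continuous.intervalIntegrable; fun_prop)]
  simp only [mul_one, one_mul, zero_mul, neg_zero, zero_add, add_zero]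
  rw [← two_mul]
  congr 1
  exact integral_congr fun σ _ => by ring

theorem discriminantSlope_free (hr : r ≠ 0) :
    discriminantSlope r w (fun σ => cos (r * σ)) (fun σ => sin (r * σ) / r)
      = sin r / r * ∫ σ in 0..1, w σ := by
  rw [discriminantSlope, ← integral_const_mul]
  refine integral_congr fun σ _ => ?_
  have : sin (r * (1 - σ)) * cos (r * σ) + cos (r * (1 - σ)) * sin (r * σ) = sin r := by
    rw [← sin_add]; ring_nf
  field_simp
  linear_combination w σ * this

theorem abs_discriminantSlope_sub_le {C : ℝ} (hr : 0 < r) (hw : Continuous w)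
    (hwC : ∀ x ∈ Icc (0 : ℝ) 1, |w x| ≤ C) (hsmall : 2 * |lam| * C ≤ r)
    (hφ : ContDiff ℝ 2 φ) (hφ_ode : ∀ x, deriv (deriv φ) x = (lam * w x - r ^ 2) * φ x)
    (hφ0 : φ 0 = 1) (hφ'0 : deriv φ 0 = 0)
    (hψ : ContDiff ℝ 2 ψ) (hψ_ode : ∀ x, deriv (deriv ψ) x = (lam * w x - r ^ 2) * ψ x)
    (hψ0 : ψ 0 = 0) (hψ'0 : deriv ψ 0 = 1) :
    |discriminantSlope r w φ ψ - sin r / r * ∫ σ in 0..1, w σ| ≤ 4 * C ^ 2 / r ^ 2 * |lam| := by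
  have hφc : Continuous φ := hφ.continuous
  have hψc : Continuous ψ := hψ.continuous
  rw [← discriminantSlope_free hr.ne', discriminantSlope, discriminantSlope,
    ← integral_sub (by apply Continuous.intervalIntegrable; fun_prop)
      (by apply Continuous.intervalIntegrable; fun_prop)]
  refine abs_intervalIntegral_le_of_forall_Icc (by norm_num) fun σ hσ => ?_
  have hφσ := abs_sub_free_solution_le hr hw hwC hφ hφ_ode hsmall hσ
  have hψσ := abs_sub_free_solution_le hr hw hwC hψ hψ_ode hsmall hσ
  rw [hφ0, hφ'0] at hφσ
  rw [hψ0, hψ'0] at hψσ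
  simp only [one_mul, zero_mul, add_zero, abs_one, abs_zero, zero_add, zero_div] at hφσ hψσ
  have hC : 0 ≤ C := (abs_nonneg _).trans (hwC σ hσ)
  calc _ = |w σ| * |sin (r * (1 - σ)) / r * (φ σ - cos (r * σ))
          + cos (r * (1 - σ)) * (ψ σ - sin (r * σ) / r)| := by
        rw [← abs_mul]; ring_nf
    _ ≤ C * (1 / r * (2 * (|lam| * C / r) * 1) + 1 * (2 * (|lam| * C / r) * (1 / r))) := by
        refine mul_le_mul (hwC σ hσ) ((abs_add_le _ _).trans (add_le_add ?_ ?_)) (abs_nonneg _) hC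
          <;> rw [abs_mul]
        · exact mul_le_mul (abs_sin_div_le_one_div _ hr) hφσ (abs_nonneg _) (by positivity)
        · exact mul_le_mul (abs_cos_le_one _) hψσ (abs_nonneg _) zero_le_one
    _ = 4 * C ^ 2 / r ^ 2 * |lam| := by field_simp; ring

end Discriminant

theorem stmt_5_general (E : ℝ) (hE : 0 < E) (w : ℝ → ℝ) (hw_cont : Continuous w)
    (Φ Ψ : ℝ → ℝ → ℝ)
    (hΦ_smooth : ∀ lam, ContDiff ℝ 2 (Φ lam))
    (hΦ_ode : ∀ lam x, deriv (deriv (Φ lam)) x = (lam * w x - E) * Φ lam x)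
    (hΦ0 : ∀ lam, Φ lam 0 = 1) (hΦ'0 : ∀ lam, deriv (Φ lam) 0 = 0)
    (hΨ_smooth : ∀ lam, ContDiff ℝ 2 (Ψ lam))
    (hΨ_ode : ∀ lam x, deriv (deriv (Ψ lam)) x = (lam * w x - E) * Ψ lam x)
    (hΨ0 : ∀ lam, Ψ lam 0 = 0) (hΨ'0 : ∀ lam, deriv (Ψ lam) 0 = 1)
    (D : ℝ → ℝ) (hD : ∀ lam, D lam = Φ lam 1 + deriv (Ψ lam) 1) :
    D 0 = 2 * Real.cos (Real.sqrt E) ∧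
    HasDerivAt D
      ((Real.sin (Real.sqrt E) / Real.sqrt E) * ∫ s in (0 : ℝ)..1, w s) 0 := by
  obtain ⟨C, hwC⟩ := isCompact_Icc.exists_bound_of_continuousOn hw_cont.continuousOn
  rw [← sq_sqrt hE.le] at hΦ_ode hΨ_ode
  set r := √E
  have hr : 0 < r := sqrt_pos.2 hE
  have hD_eq (lam : ℝ) : D lam = 2 * cos r + lam * discriminantSlope r w (Φ lam) (Ψ lam) := by
    rw [hD, discriminant_eq hr.ne' hw_cont (hΦ_smooth lam) (hΦ_ode lam) (hΦ0 lam) (hΦ'0 lam)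
      (hΨ_smooth lam) (hΨ_ode lam) (hΨ0 lam) (hΨ'0 lam)]
  have hD0 : D 0 = 2 * cos r := by simpa using hD_eq 0
  have hsmall : ∀ᶠ lam in 𝓝 0, 2 * |lam| * C ≤ r := by
    refine ((continuous_const.mul continuous_abs).mul continuous_const).tendsto' 0 0 (by simp)
      |>.eventually (ge_mem_nhds hr)
  have hslope : Tendsto (fun lam => discriminantSlope r w (Φ lam) (Ψ lam)) (𝓝 0)
      (𝓝 (sin r / r * ∫ σ in 0..1, w σ)) := by
    refine tendsto_sub_nhds_zero_iff.1 ((Asymptotics.IsBigO.of_bound (4 * C ^ 2 / r ^ 2)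
      (hsmall.mono fun lam hlam => ?_)).trans_tendsto tendsto_id)
    exact abs_discriminantSlope_sub_le hr hw_cont hwC hlam (hΦ_smooth lam)
      (hΦ_ode lam) (hΦ0 lam) (hΦ'0 lam) (hΨ_smooth lam) (hΨ_ode lam) (hΨ0 lam) (hΨ'0 lam)
  refine ⟨hD0, hasDerivAt_of_eq_add_mul (fun lam => ?_) (hslope.mono_left nhdsWithin_le_nhds)⟩
  rw [hD_eq, hD0, sub_zero]

/-- First-order expansion of the Floquet discriminant `D(λ) = Φ_λ(1) + Ψ_λ'(1)` for
`y'' = (λ w − E) y` in the coupling constant at `λ = 0`: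
`D(0) = 2 cos √E` and `D'(0) = (sin √E / √E) ∫₀¹ w`. -/
theorem stmt_5 (E : ℝ) (hE : 0 < E) (w : ℝ → ℝ) (hw_cont : Continuous w)
    (hw_per : Function.Periodic w 1) (hw_bdd : ∃ C : ℝ, ∀ x, |w x| ≤ C)
    (Φ Ψ : ℝ → ℝ → ℝ)
    (hΦ_smooth : ∀ lam, ContDiff ℝ 2 (Φ lam))
    (hΦ_ode : ∀ lam x, deriv (deriv (Φ lam)) x = (lam * w x - E) * Φ lam x)
    (hΦ0 : ∀ lam, Φ lam 0 = 1) (hΦ'0 : ∀ lam, deriv (Φ lam) 0 = 0)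
    (hΨ_smooth : ∀ lam, ContDiff ℝ 2 (Ψ lam))
    (hΨ_ode : ∀ lam x, deriv (deriv (Ψ lam)) x = (lam * w x - E) * Ψ lam x)
    (hΨ0 : ∀ lam, Ψ lam 0 = 0) (hΨ'0 : ∀ lam, deriv (Ψ lam) 0 = 1)
    (D : ℝ → ℝ) (hD : ∀ lam, D lam = Φ lam 1 + deriv (Ψ lam) 1) :
    D 0 = 2 * Real.cos (Real.sqrt E) ∧
    HasDerivAt D
      ((Real.sin (Real.sqrt E) / Real.sqrt E) * ∫ s in (0 : ℝ)..1, w s) 0 :=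
  stmt_5_general E hE w hw_cont Φ Ψ hΦ_smooth hΦ_ode hΦ0 hΦ'0 hΨ_smooth hΨ_ode hΨ0 hΨ'0 D hD
end

section
/- Let E₁, E₂ > 0 with E₁ ≠ E₂. If cos(√E₁) = cos(√E₂) and sin(√E₁)/√E₁ = sin(√E₂)/√E₂, then there exist non-negative integers k₁, k₂ with the same parity (i.e. (−1)^{k₁} = (−1)^{k₂}) such that E₁ = (k₁ π)² and E₂ = (k₂ π)². -/
/-! Put `x = √E₁`, `y = √E₂`. Equal cosines give `sin² x = sin² y`, and squaring
`y sin x = x sin y` then gives `sin² x · E₂ = sin² x · E₁`, so `sin x = 0` because `E₁ ≠ E₂`;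
likewise `sin y = 0`. Hence `x = k₁ π`, `y = k₂ π`, and `(-1)^k₁ = cos x = cos y = (-1)^k₂`. -/

open Real

theorem Real.sin_eq_zero_of_cos_eq_of_sin_div_eq {x y : ℝ} (hx : x ≠ 0) (hy : y ≠ 0)
    (hxy : x ^ 2 ≠ y ^ 2) (hcos : cos x = cos y) (hsin : sin x / x = sin y / y) :
    sin x = 0 := by
  have hsin_sq : sin x ^ 2 = sin y ^ 2 := by rw [sin_sq, sin_sq, hcos]
  have hcross : sin x * y = sin y * x := (div_eq_div_iff hx hy).mp hsin
  have hprod : sin x ^ 2 * (y ^ 2 - x ^ 2) = 0 := by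
    linear_combination (sin x * y + sin y * x) * hcross - x ^ 2 * hsin_sq
  exact pow_eq_zero_iff two_ne_zero |>.mp <|
    (mul_eq_zero.mp hprod).resolve_right (sub_ne_zero.mpr hxy.symm)

theorem Real.exists_nat_mul_pi_eq_of_sin_eq_zero {x : ℝ} (hx : 0 ≤ x) (h : sin x = 0) :
    ∃ k : ℕ, (k : ℝ) * π = x := by
  obtain ⟨n, hn⟩ := sin_eq_zero_iff.mp h
  have hn0 : 0 ≤ n := by
    have : (0 : ℝ) ≤ n := nonneg_of_mul_nonneg_left (hn ▸ hx) pi_pos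
    exact_mod_cast this
  exact ⟨n.toNat, by rwa [← Int.cast_natCast, Int.toNat_of_nonneg hn0]⟩

theorem stmt_6 (E₁ E₂ : ℝ) (hE₁ : 0 < E₁) (hE₂ : 0 < E₂) (hne : E₁ ≠ E₂)
    (hcos : Real.cos (Real.sqrt E₁) = Real.cos (Real.sqrt E₂))
    (hsin : Real.sin (Real.sqrt E₁) / Real.sqrt E₁
          = Real.sin (Real.sqrt E₂) / Real.sqrt E₂) :
    ∃ k₁ k₂ : ℕ, (-1 : ℝ) ^ k₁ = (-1 : ℝ) ^ k₂ ∧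
      E₁ = (k₁ * Real.pi) ^ 2 ∧ E₂ = (k₂ * Real.pi) ^ 2 := by
  have hx : 0 < √E₁ := sqrt_pos.mpr hE₁
  have hy : 0 < √E₂ := sqrt_pos.mpr hE₂
  have hxy : √E₁ ^ 2 ≠ √E₂ ^ 2 := by rwa [sq_sqrt hE₁.le, sq_sqrt hE₂.le]
  obtain ⟨k₁, hk₁⟩ := exists_nat_mul_pi_eq_of_sin_eq_zero hx.le <|
    sin_eq_zero_of_cos_eq_of_sin_div_eq hx.ne' hy.ne' hxy hcos hsin
  obtain ⟨k₂, hk₂⟩ := exists_nat_mul_pi_eq_of_sin_eq_zero hy.le <|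
    sin_eq_zero_of_cos_eq_of_sin_div_eq hy.ne' hx.ne' hxy.symm hcos.symm hsin.symm
  refine ⟨k₁, k₂, ?_, ?_, ?_⟩
  · rw [← cos_nat_mul_pi, ← cos_nat_mul_pi, hk₁, hk₂, hcos]
  · rw [hk₁, sq_sqrt hE₁.le]
  · rw [hk₂, sq_sqrt hE₂.le]
end

section
/- (Distinct discriminants in the uniformly definite case.) Let W : ℝ → ℝ be a continuous, bounded, 1-periodic function, let w : ℝ → ℝ be a continuous, 1-periodic function bounded below by a positive constant, and let E₁ < E₂ be real numbers. For i ∈ {1,2} and λ ∈ ℝ, let Φ_λ^i and Ψ_λ^i be the unique C² solutions of y''(x) + (W(x) + E_i) y(x) = λ w(x) y(x) on ℝ with Φ_λ^i(0) = 1, (Φ_λ^i)'(0) = 0, Ψ_λ^i(0) = 0, (Ψ_λ^i)'(0) = 1, and define D_i(λ) := Φ_λ^i(1) + (Ψ_λ^i)'(1). Then there exists λ ∈ ℝ such that |D₁(λ)| ≠ |D₂(λ)|. -/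
/-!
For `λ` large the potentials `Pᵢ = λ w - W - Eᵢ` are nonnegative, so every solution of
`y'' = Pᵢ y` with nonnegative initial data is convex and nondecreasing on `[0, ∞)`; in particular
`D₂(λ) ≥ 2`. Since `P₂ < P₁` pointwise, a Sturm-type comparison of solutions with equal initial
data gives `Φ²(1) < Φ¹(1)` and `(Ψ²)'(1) < (Ψ¹)'(1)`, hence `0 < D₂(λ) < D₁(λ)`.
-/

open Set Filter Topology

section SecondOrder

variable {f g P Q : ℝ → ℝ}

theorem deriv_le_and_tangent_le_of_deriv2_nonneg (hf : ContDiff ℝ 2 f) {a b s : ℝ}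
    (hf'' : ∀ x ∈ Ioo a b, 0 ≤ deriv (deriv f) x) (hs : s ∈ Icc a b) :
    deriv f a ≤ deriv f s ∧ f a + deriv f a * (s - a) ≤ f s := by
  have hf' := hf.differentiable_deriv_two
  have hmono : MonotoneOn (deriv f) (Icc a b) :=
    monotoneOn_of_deriv_nonneg (convex_Icc a b) hf'.continuous.continuousOn hf'.differentiableOn
      (by rwa [interior_Icc])
  have ha : a ∈ Icc a b := left_mem_Icc.2 (hs.1.trans hs.2)
  refine ⟨hmono ha hs hs.1, ?_⟩
  rcases hs.1.eq_or_lt with rfl | has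
  · simp
  obtain ⟨ξ, hξ, hξ_slope⟩ := exists_deriv_eq_slope f has hf.continuous.continuousOn
    (hf.differentiable (by norm_num)).differentiableOn
  have hξ_ge := hmono ha ⟨hξ.1.le, hξ.2.le.trans hs.2⟩ hξ.1.le
  rw [hξ_slope, le_div_iff₀ (sub_pos.2 has)] at hξ_ge
  linarith

theorem eventually_pos_nhdsGT_of_nonneg {a : ℝ} (hf : DifferentiableAt ℝ f a) (h0 : 0 ≤ f a)
    (hpos : 0 < f a + deriv f a) : ∀ᶠ x in 𝓝[>] a, 0 < f x := by
  rcases h0.eq_or_lt with hfa | hfa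
  · have hslope := (hasDerivWithinAt_iff_tendsto_slope' (lt_irrefl a)).1
      (hf.hasDerivAt.hasDerivWithinAt (s := Ioi a))
    filter_upwards [hslope (Ioi_mem_nhds (by linarith : 0 < deriv f a)), self_mem_nhdsWithin]
      with x hx_slope hx
    rw [mem_preimage, mem_Ioi, slope_def_field, ← hfa, sub_zero] at hx_slope
    exact (div_pos_iff_of_pos_right (sub_pos.2 hx)).1 hx_slope
  · exact nhdsWithin_le_nhds (hf.continuousAt.eventually (lt_mem_nhds hfa))

theorem pos_of_deriv2_nonneg_where_nonneg (hf : ContDiff ℝ 2 f) (h0 : 0 ≤ f 0)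
    (h0' : 0 ≤ deriv f 0) (hpos : 0 < f 0 + deriv f 0)
    (hf'' : ∀ x, 0 < x → 0 ≤ f x → 0 ≤ deriv (deriv f) x) {s : ℝ} (hs : 0 < s) : 0 < f s := by
  by_contra! hfs
  obtain ⟨u, hu, hpos_near⟩ := mem_nhdsGT_iff_exists_Ioc_subset.1
    (eventually_pos_nhdsGT_of_nonneg (hf.differentiable (by norm_num) 0) h0 hpos)
  set ε := min u s
  have hε : 0 < ε := lt_min hu hs
  -- `f ≥ 0` up to its first zero `z ≥ ε`, so `f` is convex on `[0, z]` and `f z > 0`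
  set Z := Icc ε s ∩ {x | f x ≤ 0}
  have hZ : IsClosed Z := isClosed_Icc.inter (isClosed_le hf.continuous continuous_const)
  have hz : sInf Z ∈ Z :=
    hZ.csInf_mem ⟨s, ⟨min_le_right _ _, le_rfl⟩, hfs⟩ ⟨ε, fun x hx => hx.1.1⟩
  set z := sInf Z
  have hz0 : 0 < z := hε.trans_le hz.1.1
  have hnonneg : ∀ x ∈ Ioo 0 z, 0 ≤ f x := by
    intro x hx
    by_contra! hfx
    rcases le_or_gt x ε with hxε | hxε
    · exact (hpos_near ⟨hx.1, hxε.trans (min_le_left _ _)⟩ : 0 < f x).not_gt hfx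
    · exact hx.2.not_ge (csInf_le ⟨ε, fun y hy => hy.1.1⟩
        ⟨⟨hxε.le, hx.2.le.trans hz.1.2⟩, hfx.le⟩)
  have htangent := (deriv_le_and_tangent_le_of_deriv2_nonneg hf
    (fun x hx => hf'' x hx.1 (hnonneg x hx)) (right_mem_Icc.2 hz0.le)).2
  have hfz : f z ≤ 0 := hz.2
  have : 0 < f 0 + deriv f 0 * z := by
    rcases h0.eq_or_lt with h | h
    · nlinarith
    · positivity
  rw [sub_zero] at htangent
  linarith

theorem deriv_le_and_tangent_le_of_deriv2_nonneg_where_nonneg (hf : ContDiff ℝ 2 f)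
    (h0 : 0 ≤ f 0) (h0' : 0 ≤ deriv f 0) (hpos : 0 < f 0 + deriv f 0)
    (hf'' : ∀ x, 0 < x → 0 ≤ f x → 0 ≤ deriv (deriv f) x) {t : ℝ} (ht : 0 ≤ t) :
    deriv f 0 ≤ deriv f t ∧ f 0 + deriv f 0 * t ≤ f t := by
  simpa using deriv_le_and_tangent_le_of_deriv2_nonneg hf
    (fun x hx => hf'' x hx.1 (pos_of_deriv2_nonneg_where_nonneg hf h0 h0' hpos hf'' hx.1).le)
    (right_mem_Icc.2 ht)

theorem deriv_le_and_tangent_le_of_deriv2_eq_mul (hf : ContDiff ℝ 2 f)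
    (hfP : ∀ x, deriv (deriv f) x = P x * f x) (hP : ∀ x, 0 < x → 0 ≤ P x) (h0 : 0 ≤ f 0)
    (h0' : 0 ≤ deriv f 0) (hpos : 0 < f 0 + deriv f 0) {t : ℝ} (ht : 0 ≤ t) :
    deriv f 0 ≤ deriv f t ∧ f 0 + deriv f 0 * t ≤ f t :=
  deriv_le_and_tangent_le_of_deriv2_nonneg_where_nonneg hf h0 h0' hpos
    (fun x hx hfx => by rw [hfP]; exact mul_nonneg (hP x hx) hfx) ht

theorem deriv_sub_const_mul (hf : Differentiable ℝ f) (hg : Differentiable ℝ g) (c : ℝ) :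
    deriv (fun x => f x - c * g x) = fun x => deriv f x - c * deriv g x :=
  funext fun x => by rw [deriv_fun_sub (hf x) ((hg x).const_mul c), deriv_const_mul c (hg x)]

theorem le_and_deriv_le_of_deriv2_eq_mul (hf : ContDiff ℝ 2 f) (hg : ContDiff ℝ 2 g)
    (hfP : ∀ x, deriv (deriv f) x = P x * f x) (hgQ : ∀ x, deriv (deriv g) x = Q x * g x)
    (hQ : ∀ x, 0 < x → 0 ≤ Q x) (hQP : ∀ x, 0 < x → Q x ≤ P x)
    (h0 : f 0 = g 0) (h0' : deriv f 0 = deriv g 0)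
    (hg0 : 0 ≤ g 0) (hg0' : 0 ≤ deriv g 0) (hpos : 0 < g 0 + deriv g 0) {t : ℝ} (ht : 0 ≤ t) :
    g t ≤ f t ∧ deriv g t ≤ deriv f t := by
  have hg_nonneg : ∀ x, 0 ≤ x → 0 ≤ g x ∧ 0 ≤ deriv g x := fun x hx => by
    have := deriv_le_and_tangent_le_of_deriv2_eq_mul hg hgQ hQ hg0 hg0' hpos hx
    constructor <;> nlinarith
  have hdf := hf.differentiable (by norm_num)
  have hdg := hg.differentiable (by norm_num)
  -- `f - g` has zero initial data, so compare `f` with `c g` for `c < 1` and let `c → 1`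
  have key : ∀ c ∈ Ico (0 : ℝ) 1, c * g t ≤ f t ∧ c * deriv g t ≤ deriv f t := by
    intro c hc
    have hd := deriv_sub_const_mul hdf hdg c
    have hd2 := deriv_sub_const_mul hf.differentiable_deriv_two hg.differentiable_deriv_two c
    have := deriv_le_and_tangent_le_of_deriv2_nonneg_where_nonneg
      (f := fun x => f x - c * g x) (hf.sub (contDiff_const.mul hg))
      (by simp only [h0]; nlinarith [hc.2]) (by simp only [hd, h0']; nlinarith [hc.2])
      (by simp only [hd, h0, h0']; nlinarith [hc.2])
      (fun x hx hx_nonneg => by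
        simp only [hd, hd2, hfP, hgQ]
        nlinarith [mul_nonneg (sub_nonneg.2 (hQP x hx)) (mul_nonneg hc.1 (hg_nonneg x hx.le).1),
          mul_nonneg ((hQ x hx).trans (hQP x hx)) hx_nonneg]) ht
    simp only [hd, h0, h0'] at this
    constructor <;> nlinarith [hc.2, hg_nonneg t ht, mul_nonneg hg0' ht]
  have hlim : ∀ y : ℝ, Tendsto (fun c => c * y) (𝓝[<] 1) (𝓝 y) := fun y => by
    simpa using ((continuous_mul_const y).tendsto 1).mono_left nhdsWithin_le_nhds
  have hev : ∀ᶠ c in 𝓝[<] (1 : ℝ), c ∈ Ico 0 1 := Ico_mem_nhdsLT zero_lt_one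
  exact ⟨le_of_tendsto (hlim _) (hev.mono fun c hc => (key c hc).1),
    le_of_tendsto (hlim _) (hev.mono fun c hc => (key c hc).2)⟩

theorem lt_and_deriv_lt_of_deriv2_eq_mul (hf : ContDiff ℝ 2 f) (hg : ContDiff ℝ 2 g)
    (hfP : ∀ x, deriv (deriv f) x = P x * f x) (hgQ : ∀ x, deriv (deriv g) x = Q x * g x)
    (hQ : ∀ x, 0 < x → 0 ≤ Q x) (hQP : ∀ x, 0 < x → Q x < P x)
    (h0 : f 0 = g 0) (h0' : deriv f 0 = deriv g 0)
    (hg0 : 0 ≤ g 0) (hg0' : 0 ≤ deriv g 0) (hpos : 0 < g 0 + deriv g 0) {t : ℝ} (ht : 0 < t) :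
    g t < f t ∧ deriv g t < deriv f t := by
  have hle : ∀ x, 0 ≤ x → g x ≤ f x := fun x hx =>
    (le_and_deriv_le_of_deriv2_eq_mul hf hg hfP hgQ hQ (fun x hx => (hQP x hx).le) h0 h0'
      hg0 hg0' hpos hx).1
  have hg_pos : ∀ x, 0 < x → 0 < g x := fun x hx =>
    pos_of_deriv2_nonneg_where_nonneg hg hg0 hg0' hpos
      (fun y hy hgy => by rw [hgQ]; exact mul_nonneg (hQ y hy) hgy) hx
  have hdf := hf.differentiable (by norm_num)
  have hdg := hg.differentiable (by norm_num)
  have hdf' := hf.differentiable_deriv_two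
  have hdg' := hg.differentiable_deriv_two
  -- `(f - g)'' = P (f - g) + (P - Q) g > 0`
  have hderiv_mono : StrictMonoOn (fun x => deriv f x - deriv g x) (Ici 0) := by
    refine strictMonoOn_of_deriv_pos (convex_Ici 0) (hdf'.sub hdg').continuous.continuousOn ?_
    rw [interior_Ici]
    intro x hx
    rw [deriv_fun_sub (hdf' x) (hdg' x), hfP, hgQ]
    nlinarith [mul_pos (sub_pos.2 (hQP x hx)) (hg_pos x hx),
      mul_nonneg ((hQ x hx).trans (hQP x hx).le) (sub_nonneg.2 (hle x hx.le))]
  have hderiv_lt : ∀ x, 0 < x → deriv g x < deriv f x := fun x hx => by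
    have := hderiv_mono self_mem_Ici hx.le hx
    simp only [h0', sub_self] at this
    linarith
  have hmono : StrictMonoOn (fun x => f x - g x) (Ici 0) := by
    refine strictMonoOn_of_deriv_pos (convex_Ici 0) (hdf.sub hdg).continuous.continuousOn ?_
    rw [interior_Ici]
    intro x hx
    rw [deriv_fun_sub (hdf x) (hdg x)]
    linarith [hderiv_lt x hx]
  have := hmono self_mem_Ici ht.le ht
  simp only [h0, sub_self] at this
  exact ⟨by linarith, hderiv_lt t ht⟩

end SecondOrder

theorem exists_forall_add_le_mul {W w : ℝ → ℝ} {C c : ℝ} (hW : ∀ x, W x ≤ C) (hc : 0 < c)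
    (hw : ∀ x, c ≤ w x) (E : ℝ) : ∃ lam, ∀ x, W x + E ≤ lam * w x := by
  refine ⟨|C + E| / c, fun x => ?_⟩
  calc W x + E ≤ |C + E| := (add_le_add_left (hW x) E).trans (le_abs_self _)
    _ = |C + E| / c * c := (div_mul_cancel₀ _ hc.ne').symm
    _ ≤ |C + E| / c * w x := by gcongr; exact hw x

theorem stmt_11_general (W w : ℝ → ℝ)
    (hW_bdd : ∃ C : ℝ, ∀ x, |W x| ≤ C)
    (hw_pos : ∃ c : ℝ, 0 < c ∧ ∀ x, c ≤ w x)
    (E₁ E₂ : ℝ) (hE : E₁ < E₂)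
    (Φ Ψ : Fin 2 → ℝ → ℝ → ℝ) (Es : Fin 2 → ℝ)
    (hEs : Es 0 = E₁ ∧ Es 1 = E₂)
    (hΦ_smooth : ∀ i lam, ContDiff ℝ 2 (Φ i lam))
    (hΦ_ode : ∀ i lam x,
      deriv (deriv (Φ i lam)) x + (W x + Es i) * Φ i lam x = lam * w x * Φ i lam x)
    (hΦ0 : ∀ i lam, Φ i lam 0 = 1) (hΦ'0 : ∀ i lam, deriv (Φ i lam) 0 = 0)
    (hΨ_smooth : ∀ i lam, ContDiff ℝ 2 (Ψ i lam))
    (hΨ_ode : ∀ i lam x,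
      deriv (deriv (Ψ i lam)) x + (W x + Es i) * Ψ i lam x = lam * w x * Ψ i lam x)
    (hΨ0 : ∀ i lam, Ψ i lam 0 = 0) (hΨ'0 : ∀ i lam, deriv (Ψ i lam) 0 = 1)
    (D : Fin 2 → ℝ → ℝ) (hD : ∀ i lam, D i lam = Φ i lam 1 + deriv (Ψ i lam) 1) :
    ∃ lam : ℝ, |D 0 lam| ≠ |D 1 lam| := by
  obtain ⟨C, hC⟩ := hW_bdd
  obtain ⟨c, hc, hcw⟩ := hw_pos
  obtain ⟨lam, hlam⟩ := exists_forall_add_le_mul (fun x => (le_abs_self _).trans (hC x)) hc hcw E₂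
  set P : Fin 2 → ℝ → ℝ := fun i x => lam * w x - (W x + Es i)
  have hP1 : ∀ x, 0 < x → 0 ≤ P 1 x := fun x _ => by simp only [P, hEs.2]; linarith [hlam x]
  have hP10 : ∀ x, 0 < x → P 1 x < P 0 x := fun x _ => by simp only [P, hEs.1, hEs.2]; linarith
  have hΦP : ∀ i x, deriv (deriv (Φ i lam)) x = P i x * Φ i lam x := fun i x => by
    linear_combination hΦ_ode i lam x
  have hΨP : ∀ i x, deriv (deriv (Ψ i lam)) x = P i x * Ψ i lam x := fun i x => by
    linear_combination hΨ_ode i lam x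
  have hΦ := lt_and_deriv_lt_of_deriv2_eq_mul (hΦ_smooth 0 lam) (hΦ_smooth 1 lam) (hΦP 0) (hΦP 1)
    hP1 hP10 (by rw [hΦ0, hΦ0]) (by rw [hΦ'0, hΦ'0]) (by rw [hΦ0]; norm_num)
    (by rw [hΦ'0]) (by rw [hΦ0, hΦ'0]; norm_num) one_pos
  have hΨ := lt_and_deriv_lt_of_deriv2_eq_mul (hΨ_smooth 0 lam) (hΨ_smooth 1 lam) (hΨP 0) (hΨP 1)
    hP1 hP10 (by rw [hΨ0, hΨ0]) (by rw [hΨ'0, hΨ'0]) (by rw [hΨ0]) (by rw [hΨ'0]; norm_num)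
    (by rw [hΨ0, hΨ'0]; norm_num) one_pos
  have hΦ1 := (deriv_le_and_tangent_le_of_deriv2_eq_mul (hΦ_smooth 1 lam) (hΦP 1) hP1
    (by rw [hΦ0]; norm_num) (by rw [hΦ'0]) (by rw [hΦ0, hΦ'0]; norm_num) zero_le_one).2
  have hΨ1 := (deriv_le_and_tangent_le_of_deriv2_eq_mul (hΨ_smooth 1 lam) (hΨP 1) hP1
    (by rw [hΨ0]) (by rw [hΨ'0]; norm_num) (by rw [hΨ0, hΨ'0]; norm_num) zero_le_one).1
  rw [hΦ0, hΦ'0] at hΦ1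
  rw [hΨ'0] at hΨ1
  refine ⟨lam, ?_⟩
  rw [hD, hD, abs_of_pos (by linarith), abs_of_pos (by linarith)]
  linarith

/-- Distinct discriminants in the uniformly definite case: for the ODEs
`y'' + (W + Eᵢ) y = λ w y`, `i = 1, 2`, with `E₁ < E₂`, `W` continuous bounded
1-periodic and `w` continuous 1-periodic bounded below by a positive constant,
there exists `λ` with `|D₁(λ)| ≠ |D₂(λ)|`. -/
theorem stmt_11 (W w : ℝ → ℝ)
    (hW_cont : Continuous W) (hW_bdd : ∃ C : ℝ, ∀ x, |W x| ≤ C)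
    (hW_per : Function.Periodic W 1)
    (hw_cont : Continuous w) (hw_per : Function.Periodic w 1)
    (hw_pos : ∃ c : ℝ, 0 < c ∧ ∀ x, c ≤ w x)
    (E₁ E₂ : ℝ) (hE : E₁ < E₂)
    (Φ Ψ : Fin 2 → ℝ → ℝ → ℝ) (Es : Fin 2 → ℝ)
    (hEs : Es 0 = E₁ ∧ Es 1 = E₂)
    (hΦ_smooth : ∀ i lam, ContDiff ℝ 2 (Φ i lam))
    (hΦ_ode : ∀ i lam x,
      deriv (deriv (Φ i lam)) x + (W x + Es i) * Φ i lam x = lam * w x * Φ i lam x)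
    (hΦ0 : ∀ i lam, Φ i lam 0 = 1) (hΦ'0 : ∀ i lam, deriv (Φ i lam) 0 = 0)
    (hΨ_smooth : ∀ i lam, ContDiff ℝ 2 (Ψ i lam))
    (hΨ_ode : ∀ i lam x,
      deriv (deriv (Ψ i lam)) x + (W x + Es i) * Ψ i lam x = lam * w x * Ψ i lam x)
    (hΨ0 : ∀ i lam, Ψ i lam 0 = 0) (hΨ'0 : ∀ i lam, deriv (Ψ i lam) 0 = 1)
    (D : Fin 2 → ℝ → ℝ) (hD : ∀ i lam, D i lam = Φ i lam 1 + deriv (Ψ i lam) 1) :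
    ∃ lam : ℝ, |D 0 lam| ≠ |D 1 lam| :=
  stmt_11_general W w hW_bdd hw_pos E₁ E₂ hE Φ Ψ Es hEs hΦ_smooth hΦ_ode hΦ0 hΦ'0 hΨ_smooth hΨ_ode
    hΨ0 hΨ'0 D hD
end

section
/- (Distinct discriminants for the free background, outside an exceptional discrete set.) Let w : ℝ → ℝ be a continuous, bounded, 1-periodic, non-negative function with ∫₀¹ w(s) ds > 0. For E ∈ ℝ and λ ∈ ℝ, let Φ_λ^E and Ψ_λ^E be the unique C² solutions of y''(x) + E y(x) = λ w(x) y(x) on ℝ with Φ_λ^E(0) = 1, (Φ_λ^E)'(0) = 0, Ψ_λ^E(0) = 0, (Ψ_λ^E)'(0) = 1, and define D_E(λ) := Φ_λ^E(1) + (Ψ_λ^E)'(1). Let S := {(kπ)² : k ∈ ℕ} (a set with no accumulation point). Then for all E₁, E₂ ∈ ℝ with E₁ ≠ E₂ such that not both E₁ ∈ S and E₂ ∈ S, there exists λ ∈ ℝ with |D_{E₁}(λ)| ≠ |D_{E₂}(λ)|. -/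
/-!
At `λ = 0` the equation has constant coefficients, so `Ψ'` solves it with the initial data of `Φ`
and `D_E(0) = 2 Φ_E(1)`, which is `2 cosh √(-E)` for `E ≤ 0` and `2 cos √E` for `E ≥ 0`. For
`E = k² > 0`, first-order perturbation theory (variation of constants for the first variation, and
Grönwall's inequality for the `O(λ²)` remainder) gives `D_E'(0) = (sin k / k) ∫₀¹ w`.
If `|D_{E₁}| = |D_{E₂}|` and `E₁ ∉ S`, the values at `0` rule out mixed signs and settle the case
`E₁, E₂ < 0` by injectivity of `cosh`; for `E₁, E₂ > 0` they give `|sin √E₁| = |sin √E₂| ≠ 0`,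
and then `|D_{E₁}'(0)| = |D_{E₂}'(0)|` forces `√E₁ = √E₂`.
-/

open Real Set intervalIntegral Asymptotics

theorem gronwallBound_δ0 (K ε x : ℝ) :
    gronwallBound 0 K ε x = ε * gronwallBound 0 K 1 x := by
  simp only [gronwallBound]; split_ifs <;> ring

theorem hasDerivAt_of_abs_sub_le_sq {f : ℝ → ℝ} {a d c : ℝ}
    (h : ∀ x, |x| ≤ 1 → |f x - (a + x * d)| ≤ c * x ^ 2) : HasDerivAt f d 0 := by
  have ha : f 0 = a := by simpa [sub_eq_zero] using h 0 (by simp)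
  rw [hasDerivAt_iff_isLittleO_nhds_zero]
  refine IsBigO.trans_isLittleO (g := fun x : ℝ => x ^ 2) ?_ (isLittleO_pow_id one_lt_two)
  refine IsBigO.of_bound c ?_
  filter_upwards [Metric.closedBall_mem_nhds (0 : ℝ) zero_lt_one] with x hx
  rw [zero_add, ha, smul_eq_mul, norm_eq_abs, norm_eq_abs, abs_pow, sq_abs, sub_sub]
  exact h x (by simpa using hx)

theorem abs_eq_abs_of_hasDerivAt_of_abs_eq {f g : ℝ → ℝ} {a b x : ℝ} (h : ∀ y, |f y| = |g y|)
    (hf : HasDerivAt f a x) (hg : HasDerivAt g b x) : |a| = |b| := by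
  by_cases hx : f x = 0
  · have hgx : g x = 0 := abs_eq_zero.1 ((h x).symm.trans (by simp [hx]))
    refine tendsto_nhds_unique ((hasDerivAt_iff_tendsto_slope.1 hf).abs.congr fun y => ?_)
      (hasDerivAt_iff_tendsto_slope.1 hg).abs
    simp [slope_def_field, hx, hgx, abs_div, h y]
  · have hsq : f * f = g * g := by
      ext y; simp only [Pi.mul_apply]; rw [← abs_mul_abs_self, h y, abs_mul_abs_self]
    have := (hsq ▸ hf.mul hf).unique (hg.mul hg)
    have : |a| * |f x| = |b| * |f x| := by
      rw [← abs_mul, show a * f x = b * g x by linarith, abs_mul, h x]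
    exact mul_right_cancel₀ (abs_ne_zero.2 hx) this

def IsLinODESol (q r y y' : ℝ → ℝ) : Prop :=
  ∀ x, HasDerivAt y (y' x) x ∧ HasDerivAt y' (q x * y x + r x) x

namespace IsLinODESol

variable {q r r₂ y y' z z' : ℝ → ℝ}

theorem of_contDiff (hy : ContDiff ℝ 2 y) (h : ∀ x, deriv (deriv y) x = q x * y x + r x) :
    IsLinODESol q r y (deriv y) := by
  rw [show (2 : WithTop ℕ∞) = 1 + 1 from rfl, contDiff_succ_iff_deriv] at hy
  exact fun x => ⟨(hy.1 x).hasDerivAt,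
    h x ▸ (hy.2.2.differentiable one_ne_zero x).hasDerivAt⟩

theorem sub (hy : IsLinODESol q r y y') (hz : IsLinODESol q r₂ z z') :
    IsLinODESol q (r - r₂) (y - z) (y' - z') := fun x =>
  ⟨(hy x).1.sub (hz x).1,
    ((hy x).2.sub (hz x).2).congr_deriv (by simp only [Pi.sub_apply]; ring)⟩

theorem deriv_of_const {c : ℝ} (hy : IsLinODESol (fun _ => c) 0 y y') :
    IsLinODESol (fun _ => c) 0 y' (fun x => c * y x) := fun x =>
  ⟨by simpa using (hy x).2, by simpa using (hy x).1.const_mul c⟩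

theorem continuous (hy : IsLinODESol q r y y') : Continuous y :=
  continuous_iff_continuousAt.2 fun x => (hy x).1.continuousAt

theorem abs_le_gronwallBound (hy : IsLinODESol q r y y') {K ε : ℝ} (hK : 0 ≤ K)
    (hq : ∀ x ∈ Icc (0 : ℝ) 1, |q x| ≤ K) (hr : ∀ x ∈ Icc (0 : ℝ) 1, |r x| ≤ ε)
    (h0 : y 0 = 0) (h0' : y' 0 = 0) :
    |y 1| ≤ gronwallBound 0 (K + 1) ε 1 ∧ |y' 1| ≤ gronwallBound 0 (K + 1) ε 1 := by
  have hf : ∀ x, HasDerivAt (fun x => (y x, y' x)) (y' x, q x * y x + r x) x :=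
    fun x => (hy x).1.prodMk (hy x).2
  have key := norm_le_gronwallBound_of_norm_deriv_right_le (δ := 0) (K := K + 1) (ε := ε)
    (a := 0) (b := 1)
    (fun x _ => (hf x).continuousAt.continuousWithinAt) (fun x _ => (hf x).hasDerivWithinAt)
    (by simp [h0, h0']) (fun x hx => ?_) 1 (right_mem_Icc.2 zero_le_one)
  · simpa [Prod.norm_def] using key
  · have hx' := Ico_subset_Icc_self hx
    simp only [Prod.norm_def, Real.norm_eq_abs]
    have hmax := le_max_left |y x| |y' x|
    have hmax' := le_max_right |y x| |y' x|
    have hqy : |q x| * |y x| ≤ K * max |y x| |y' x| :=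
      mul_le_mul (hq x hx') hmax (abs_nonneg _) hK
    have hε : 0 ≤ ε := (abs_nonneg _).trans (hr x hx')
    have : |q x * y x + r x| ≤ |q x| * |y x| + |r x| := abs_mul (q x) (y x) ▸ abs_add_le _ _
    refine max_le ?_ ?_ <;> nlinarith [hr x hx', abs_nonneg (y' x)]

theorem eq_at_one (hq : ContinuousOn q (Icc 0 1)) (hy : IsLinODESol q 0 y y')
    (hz : IsLinODESol q 0 z z') (h0 : y 0 = z 0) (h0' : y' 0 = z' 0) :
    y 1 = z 1 ∧ y' 1 = z' 1 := by
  obtain ⟨K, hK⟩ := isCompact_Icc.exists_bound_of_continuousOn hq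
  have hK0 : 0 ≤ K := (norm_nonneg _).trans (hK 0 (left_mem_Icc.2 zero_le_one))
  have := (hy.sub hz).abs_le_gronwallBound hK0 hK (ε := 0) (by simp) (by simp [h0])
    (by simp [h0'])
  simp only [gronwallBound_ε0_δ0, Pi.sub_apply, abs_nonpos_iff, sub_eq_zero] at this
  exact this

end IsLinODESol

theorem hasDerivAt_eval_one_of_variation {q w : ℝ → ℝ} (hq : Continuous q) (hw : Continuous w)
    {y y' : ℝ → ℝ → ℝ} (hy : ∀ lam, IsLinODESol (fun x => q x + lam * w x) 0 (y lam) (y' lam))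
    {u₀ u₀' u₁ u₁' : ℝ → ℝ} (hu₀ : IsLinODESol q 0 u₀ u₀')
    (hu₁ : IsLinODESol q (fun x => w x * u₀ x) u₁ u₁')
    (h0 : ∀ lam, y lam 0 = u₀ 0) (h0' : ∀ lam, y' lam 0 = u₀' 0)
    (hu₁0 : u₁ 0 = 0) (hu₁0' : u₁' 0 = 0) :
    HasDerivAt (fun lam => y lam 1) (u₁ 1) 0 ∧ HasDerivAt (fun lam => y' lam 1) (u₁' 1) 0 := by
  obtain ⟨A, hA⟩ := (isCompact_Icc (a := (0 : ℝ)) (b := 1)).exists_bound_of_continuousOn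
    (f := fun x => |q x| + |w x|) (by fun_prop)
  obtain ⟨B, hB⟩ := (isCompact_Icc (a := (0 : ℝ)) (b := 1)).exists_bound_of_continuousOn
    (hw.mul hu₁.continuous).continuousOn
  have hA0 : 0 ≤ A := (norm_nonneg _).trans (hA 0 (left_mem_Icc.2 zero_le_one))
  set c := B * gronwallBound 0 (A + 1) 1 1
  have key : ∀ lam, |lam| ≤ 1 →
      |y lam 1 - (u₀ 1 + lam * u₁ 1)| ≤ c * lam ^ 2 ∧
        |y' lam 1 - (u₀' 1 + lam * u₁' 1)| ≤ c * lam ^ 2 := by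
    intro lam hlam
    -- `u₀ + λ u₁` solves the perturbed equation up to the forcing `-λ² w u₁`
    have hz : IsLinODESol (fun x => q x + lam * w x) (fun x => -(lam ^ 2 * (w x * u₁ x)))
        (fun x => u₀ x + lam * u₁ x) (fun x => u₀' x + lam * u₁' x) := fun x =>
      ⟨(hu₀ x).1.add ((hu₁ x).1.const_mul lam),
        ((hu₀ x).2.add ((hu₁ x).2.const_mul lam)).congr_deriv
          (by simp only [Pi.zero_apply]; ring)⟩
    have hqw : ∀ x ∈ Icc (0 : ℝ) 1, |q x + lam * w x| ≤ A := fun x hx => by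
      have := hA x hx
      rw [norm_eq_abs, abs_of_nonneg (by positivity)] at this
      calc |q x + lam * w x| ≤ |q x| + |lam| * |w x| := abs_mul lam (w x) ▸ abs_add_le _ _
        _ ≤ A := by nlinarith [abs_nonneg (w x)]
    have hr : ∀ x ∈ Icc (0 : ℝ) 1, |(0 - fun x => -(lam ^ 2 * (w x * u₁ x))) x| ≤ lam ^ 2 * B :=
      fun x hx => by
        simpa [abs_mul] using mul_le_mul_of_nonneg_left (hB x hx) (sq_nonneg lam)
    have := ((hy lam).sub hz).abs_le_gronwallBound hA0 hqw hr
      (by simp [h0, hu₁0]) (by simp [h0', hu₁0'])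
    rw [gronwallBound_δ0, show lam ^ 2 * B * _ = c * lam ^ 2 by ring] at this
    exact this
  exact ⟨hasDerivAt_of_abs_sub_le_sq fun lam hlam => (key lam hlam).1,
    hasDerivAt_of_abs_sub_le_sq fun lam hlam => (key lam hlam).2⟩

theorem isLinODESol_cos (k : ℝ) :
    IsLinODESol (fun _ => -k ^ 2) 0 (fun x => cos (k * x)) (fun x => -(k * sin (k * x))) :=
  fun x => have h := (hasDerivAt_id' x).const_mul k
    ⟨h.cos.congr_deriv (by ring),
      (h.sin.const_mul k).neg.congr_deriv (by simp only [Pi.zero_apply]; ring)⟩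

theorem isLinODESol_sin_div {k : ℝ} (hk : k ≠ 0) :
    IsLinODESol (fun _ => -k ^ 2) 0 (fun x => sin (k * x) / k) (fun x => cos (k * x)) :=
  fun x => have h := (hasDerivAt_id' x).const_mul k
    ⟨(h.sin.div_const k).congr_deriv (by field_simp),
      h.cos.congr_deriv (by simp only [Pi.zero_apply]; field_simp; ring)⟩

theorem isLinODESol_cosh (k : ℝ) :
    IsLinODESol (fun _ => k ^ 2) 0 (fun x => cosh (k * x)) (fun x => k * sinh (k * x)) :=
  fun x => have h := (hasDerivAt_id' x).const_mul k
    ⟨h.cosh.congr_deriv (by ring),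
      (h.sinh.const_mul k).congr_deriv (by simp only [Pi.zero_apply]; ring)⟩

noncomputable def duhamel (k : ℝ) (f : ℝ → ℝ) (x : ℝ) : ℝ :=
  (sin (k * x) * (∫ s in 0..x, cos (k * s) * f s) -
    cos (k * x) * ∫ s in 0..x, sin (k * s) * f s) / k

noncomputable def duhamelDeriv (k : ℝ) (f : ℝ → ℝ) (x : ℝ) : ℝ :=
  cos (k * x) * (∫ s in 0..x, cos (k * s) * f s) + sin (k * x) * ∫ s in 0..x, sin (k * s) * f s

@[simp] theorem duhamel_zero (k : ℝ) (f : ℝ → ℝ) : duhamel k f 0 = 0 := by simp [duhamel]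

@[simp] theorem duhamelDeriv_zero (k : ℝ) (f : ℝ → ℝ) : duhamelDeriv k f 0 = 0 := by
  simp [duhamelDeriv]

theorem isLinODESol_duhamel {k : ℝ} (hk : k ≠ 0) {f : ℝ → ℝ} (hf : Continuous f) :
    IsLinODESol (fun _ => -k ^ 2) f (duhamel k f) (duhamelDeriv k f) := fun x => by
  have hkx := (hasDerivAt_id' x).const_mul k
  have hC := (show Continuous fun s => cos (k * s) * f s by fun_prop).integral_hasStrictDerivAt 0 x
  have hS := (show Continuous fun s => sin (k * s) * f s by fun_prop).integral_hasStrictDerivAt 0 x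
  constructor
  · have := ((hkx.sin.mul hC.hasDerivAt).sub (hkx.cos.mul hS.hasDerivAt)).div_const k
    refine this.congr_deriv ?_
    unfold duhamelDeriv
    field_simp
    ring
  · refine ((hkx.cos.mul hC.hasDerivAt).add (hkx.sin.mul hS.hasDerivAt)).congr_deriv ?_
    unfold duhamel
    field_simp
    linear_combination f x * sin_sq_add_cos_sq (k * x)

theorem duhamel_add_duhamelDeriv {k : ℝ} (hk : k ≠ 0) {w : ℝ → ℝ} (hw : Continuous w) :
    duhamel k (fun x => w x * cos (k * x)) 1 + duhamelDeriv k (fun x => w x * (sin (k * x) / k)) 1 =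
      sin k / k * ∫ s in 0..1, w s := by
  have hsc : ∫ s in (0 : ℝ)..1, cos (k * s) * (w s * (sin (k * s) / k)) =
      (∫ s in (0 : ℝ)..1, sin (k * s) * (w s * cos (k * s))) / k := by
    rw [← integral_div]; congr 1; ext s; ring
  have hss : ∫ s in (0 : ℝ)..1, sin (k * s) * (w s * (sin (k * s) / k)) =
      ((∫ s in (0 : ℝ)..1, w s) - ∫ s in (0 : ℝ)..1, cos (k * s) * (w s * cos (k * s))) / k := by
    have hcc : Continuous fun s => cos (k * s) * (w s * cos (k * s)) := by fun_prop
    rw [← integral_sub (hw.intervalIntegrable _ _) (hcc.intervalIntegrable _ _), ← integral_div]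
    congr 1; ext s
    linear_combination w s / k * cos_sq_add_sin_sq (k * s)
  simp only [duhamel, duhamelDeriv, mul_one, hsc, hss]
  field_simp
  ring

structure IsFundamentalSystem (q φ φ' ψ ψ' : ℝ → ℝ) : Prop where
  sol_φ : IsLinODESol q 0 φ φ'
  sol_ψ : IsLinODESol q 0 ψ ψ'
  φ_zero : φ 0 = 1
  φ'_zero : φ' 0 = 0
  ψ_zero : ψ 0 = 0
  ψ'_zero : ψ' 0 = 1

namespace IsFundamentalSystem

variable {φ φ' ψ ψ' : ℝ → ℝ}

theorem disc_eq_two_mul_of_const {c : ℝ} (h : IsFundamentalSystem (fun _ => c) φ φ' ψ ψ') :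
    φ 1 + ψ' 1 = 2 * φ 1 := by
  -- for constant coefficients `ψ'` solves the same equation, with the initial data of `φ`
  have := h.sol_ψ.deriv_of_const.eq_at_one continuousOn_const h.sol_φ
    (h.ψ'_zero.trans h.φ_zero.symm) (by simp [h.ψ_zero, h.φ'_zero])
  linarith [this.1]

theorem disc_eq_two_mul_cos {k : ℝ} (h : IsFundamentalSystem (fun _ => -k ^ 2) φ φ' ψ ψ') :
    φ 1 + ψ' 1 = 2 * cos k := by
  have := h.sol_φ.eq_at_one continuousOn_const (isLinODESol_cos k) (by simp [h.φ_zero])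
    (by simp [h.φ'_zero])
  rw [h.disc_eq_two_mul_of_const, this.1, mul_one]

theorem disc_eq_two_mul_cosh {k : ℝ} (h : IsFundamentalSystem (fun _ => k ^ 2) φ φ' ψ ψ') :
    φ 1 + ψ' 1 = 2 * cosh k := by
  have := h.sol_φ.eq_at_one continuousOn_const (isLinODESol_cosh k) (by simp [h.φ_zero])
    (by simp [h.φ'_zero])
  rw [h.disc_eq_two_mul_of_const, this.1, mul_one]

end IsFundamentalSystem

theorem hasDerivAt_disc {w : ℝ → ℝ} (hw : Continuous w) {k : ℝ} (hk : k ≠ 0)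
    {φ φ' ψ ψ' : ℝ → ℝ → ℝ}
    (h : ∀ lam,
      IsFundamentalSystem (fun x => -k ^ 2 + lam * w x) (φ lam) (φ' lam) (ψ lam) (ψ' lam)) :
    HasDerivAt (fun lam => φ lam 1 + ψ' lam 1) (sin k / k * ∫ s in 0..1, w s) 0 := by
  have hφ := hasDerivAt_eval_one_of_variation continuous_const hw (fun lam => (h lam).sol_φ)
    (isLinODESol_cos k) (isLinODESol_duhamel hk (by fun_prop))
    (fun lam => by simp [(h lam).φ_zero]) (fun lam => by simp [(h lam).φ'_zero])
    (duhamel_zero _ _) (duhamelDeriv_zero _ _)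
  have hψ := hasDerivAt_eval_one_of_variation continuous_const hw (fun lam => (h lam).sol_ψ)
    (isLinODESol_sin_div hk) (isLinODESol_duhamel hk (by fun_prop))
    (fun lam => by simp [(h lam).ψ_zero]) (fun lam => by simp [(h lam).ψ'_zero])
    (duhamel_zero _ _) (duhamelDeriv_zero _ _)
  exact (hφ.1.add hψ.2).congr_deriv (duhamel_add_duhamelDeriv hk hw)

theorem sin_sqrt_ne_zero {E : ℝ} (hE : 0 ≤ E) (hS : ∀ n : ℕ, E ≠ (n * π) ^ 2) : sin √E ≠ 0 := by
  rw [Ne, sin_eq_zero_iff]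
  rintro ⟨n, hn⟩
  have hn0 : 0 ≤ n := by
    have := hn ▸ sqrt_nonneg E
    exact_mod_cast nonneg_of_mul_nonneg_left this pi_pos
  obtain ⟨m, rfl⟩ := Int.eq_ofNat_of_zero_le hn0
  exact hS m (by rw [← sq_sqrt hE, ← hn]; norm_cast)

theorem eq_of_forall_abs_disc_eq {D : ℝ → ℝ → ℝ} {I : ℝ} (hI : I ≠ 0)
    (hneg : ∀ E ≤ 0, D E 0 = 2 * cosh √(-E)) (hnonneg : ∀ E, 0 ≤ E → D E 0 = 2 * cos √E)
    (hder : ∀ E, 0 < E → HasDerivAt (D E) (sin √E / √E * I) 0)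
    {E₁ E₂ : ℝ} (hE₁ : ∀ n : ℕ, E₁ ≠ (n * π) ^ 2) (h : ∀ lam, |D E₁ lam| = |D E₂ lam|) :
    E₁ = E₂ := by
  have h0 := h 0
  rcases lt_or_gt_of_ne (show E₁ ≠ 0 from fun hE => hE₁ 0 (by simp [hE])) with h1 | h1
  · have hgt : 2 < |D E₁ 0| := by
      rw [hneg E₁ h1.le, abs_of_pos (by positivity)]
      linarith [one_lt_cosh.2 (sqrt_pos.2 (neg_pos.2 h1)).ne']
    have h2 : E₂ ≤ 0 := by
      by_contra! h2
      rw [h0, hnonneg E₂ h2.le, abs_mul, abs_two] at hgt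
      linarith [abs_cos_le_one √E₂]
    rw [hneg E₁ h1.le, hneg E₂ h2, abs_of_pos (by positivity), abs_of_pos (by positivity)] at h0
    have := cosh_injOn (sqrt_nonneg _) (sqrt_nonneg _) (by linarith : cosh √(-E₁) = cosh √(-E₂))
    linarith [(sqrt_inj (neg_nonneg.2 h1.le) (neg_nonneg.2 h2)).1 this]
  · have hs₁ := sin_sqrt_ne_zero h1.le hE₁
    have h2 : 0 < E₂ := by
      by_contra! h2
      have hlt : |D E₁ 0| ^ 2 < 4 := by
        rw [hnonneg E₁ h1.le, sq_abs]
        nlinarith [sin_sq_add_cos_sq √E₁, sq_pos_of_ne_zero hs₁]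
      rw [h0, hneg E₂ h2, sq_abs] at hlt
      nlinarith [one_le_cosh √(-E₂)]
    have hsin : |sin √E₁| = |sin √E₂| := by
      have := congrArg (· ^ 2) h0
      simp only [hnonneg E₁ h1.le, hnonneg E₂ h2.le, sq_abs] at this
      rw [← sq_eq_sq₀ (abs_nonneg _) (abs_nonneg _), sq_abs, sq_abs]
      nlinarith [sin_sq_add_cos_sq √E₁, sin_sq_add_cos_sq √E₂]
    have hd := abs_eq_abs_of_hasDerivAt_of_abs_eq h (hder E₁ h1) (hder E₂ h2)
    rw [abs_mul, abs_mul, abs_div, abs_div, hsin, abs_of_pos (sqrt_pos.2 h1),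
      abs_of_pos (sqrt_pos.2 h2)] at hd
    have hs : |sin √E₂| ≠ 0 := hsin ▸ abs_ne_zero.2 hs₁
    field_simp at hd
    exact ((sqrt_inj h2.le h1.le).1 hd).symm

theorem stmt_12_general (w : ℝ → ℝ)
    (hw_cont : Continuous w)
    (hw_mean : 0 < ∫ s in (0 : ℝ)..1, w s)
    (Φ Ψ : ℝ → ℝ → ℝ → ℝ)
    (hΦ_smooth : ∀ E lam, ContDiff ℝ 2 (Φ E lam))
    (hΦ_ode : ∀ E lam x,
      deriv (deriv (Φ E lam)) x + E * Φ E lam x = lam * w x * Φ E lam x)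
    (hΦ0 : ∀ E lam, Φ E lam 0 = 1) (hΦ'0 : ∀ E lam, deriv (Φ E lam) 0 = 0)
    (hΨ_smooth : ∀ E lam, ContDiff ℝ 2 (Ψ E lam))
    (hΨ_ode : ∀ E lam x,
      deriv (deriv (Ψ E lam)) x + E * Ψ E lam x = lam * w x * Ψ E lam x)
    (hΨ0 : ∀ E lam, Ψ E lam 0 = 0) (hΨ'0 : ∀ E lam, deriv (Ψ E lam) 0 = 1)
    (D : ℝ → ℝ → ℝ) (hD : ∀ E lam, D E lam = Φ E lam 1 + deriv (Ψ E lam) 1)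
    (S : Set ℝ) (hS : S = {x : ℝ | ∃ k : ℕ, x = ((k : ℝ) * Real.pi) ^ 2})
    (E₁ E₂ : ℝ) (hne : E₁ ≠ E₂) (hnotS : ¬ (E₁ ∈ S ∧ E₂ ∈ S)) :
    ∃ lam : ℝ, |D E₁ lam| ≠ |D E₂ lam| := by
  have hfund : ∀ E lam, IsFundamentalSystem (fun x => -E + lam * w x)
      (Φ E lam) (deriv (Φ E lam)) (Ψ E lam) (deriv (Ψ E lam)) := fun E lam =>
    ⟨.of_contDiff (hΦ_smooth E lam) fun x => by
        rw [Pi.zero_apply]; linear_combination hΦ_ode E lam x,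
      .of_contDiff (hΨ_smooth E lam) fun x => by
        rw [Pi.zero_apply]; linear_combination hΨ_ode E lam x,
      hΦ0 E lam, hΦ'0 E lam, hΨ0 E lam, hΨ'0 E lam⟩
  have hneg : ∀ E ≤ 0, D E 0 = 2 * cosh √(-E) := fun E hE => by
    rw [hD, IsFundamentalSystem.disc_eq_two_mul_cosh]
    simpa [sq_sqrt (neg_nonneg.2 hE)] using hfund E 0
  have hnonneg : ∀ E, 0 ≤ E → D E 0 = 2 * cos √E := fun E hE => by
    rw [hD, IsFundamentalSystem.disc_eq_two_mul_cos]
    simpa [sq_sqrt hE] using hfund E 0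
  have hder : ∀ E, 0 < E → HasDerivAt (D E) (sin √E / √E * ∫ s in (0 : ℝ)..1, w s) 0 :=
    fun E hE => funext (hD E) ▸ hasDerivAt_disc hw_cont (sqrt_pos.2 hE).ne' fun lam => by
      simpa [sq_sqrt hE.le] using hfund E lam
  have key : ∀ {E E'}, E ∉ S → (∀ lam, |D E lam| = |D E' lam|) → E = E' := fun hE h =>
    eq_of_forall_abs_disc_eq hw_mean.ne' hneg hnonneg hder (fun n hn => hE (hS ▸ ⟨n, hn⟩)) h
  by_contra! h
  rcases not_and_or.1 hnotS with h₁ | h₂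
  · exact hne (key h₁ h)
  · exact hne (key h₂ fun lam => (h lam).symm).symm

/-- Distinct discriminants for the free background, outside the exceptional set
`S = {(kπ)² : k ∈ ℕ}`: for the ODEs `y'' + E y = λ w y` with `w` continuous bounded
1-periodic non-negative of positive mean, if `E₁ ≠ E₂` and not both `E₁, E₂ ∈ S`,
then there exists `λ` with `|D_{E₁}(λ)| ≠ |D_{E₂}(λ)|`. -/
theorem stmt_12 (w : ℝ → ℝ)
    (hw_cont : Continuous w) (hw_bdd : ∃ C : ℝ, ∀ x, |w x| ≤ C)
    (hw_per : Function.Periodic w 1) (hw_nonneg : ∀ x, 0 ≤ w x)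
    (hw_mean : 0 < ∫ s in (0 : ℝ)..1, w s)
    (Φ Ψ : ℝ → ℝ → ℝ → ℝ)
    (hΦ_smooth : ∀ E lam, ContDiff ℝ 2 (Φ E lam))
    (hΦ_ode : ∀ E lam x,
      deriv (deriv (Φ E lam)) x + E * Φ E lam x = lam * w x * Φ E lam x)
    (hΦ0 : ∀ E lam, Φ E lam 0 = 1) (hΦ'0 : ∀ E lam, deriv (Φ E lam) 0 = 0)
    (hΨ_smooth : ∀ E lam, ContDiff ℝ 2 (Ψ E lam))
    (hΨ_ode : ∀ E lam x,
      deriv (deriv (Ψ E lam)) x + E * Ψ E lam x = lam * w x * Ψ E lam x)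
    (hΨ0 : ∀ E lam, Ψ E lam 0 = 0) (hΨ'0 : ∀ E lam, deriv (Ψ E lam) 0 = 1)
    (D : ℝ → ℝ → ℝ) (hD : ∀ E lam, D E lam = Φ E lam 1 + deriv (Ψ E lam) 1)
    (S : Set ℝ) (hS : S = {x : ℝ | ∃ k : ℕ, x = ((k : ℝ) * Real.pi) ^ 2})
    (E₁ E₂ : ℝ) (hne : E₁ ≠ E₂) (hnotS : ¬ (E₁ ∈ S ∧ E₂ ∈ S)) :
    ∃ lam : ℝ, |D E₁ lam| ≠ |D E₂ lam| :=
  stmt_12_general w hw_cont hw_mean Φ Ψ hΦ_smooth hΦ_ode hΦ0 hΦ'0 hΨ_smooth hΨ_ode hΨ0 hΨ'0 D hD S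
    hS E₁ E₂ hne hnotS
end
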